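/- arXiv:1605.04757 — 3 statements merged into one kernel-verified Lean document; each statement's English description precedes it below -/
import Mathlib

section
/- Let M(x) be a positive increasing function with M(x) → ∞ as x → ∞ and M(x) = o(x/log²x). Suppose that for every function h = h(x) satisfying M(x) ≤ h(x) ≤ x one has π(x + h(x)) − π(x) ∼ h(x)/log x as x → ∞. Then (2/M(x)) · ∑_{2k ≤ M(x)} π_{2k}(x) ∼ 2x/log²x as x → ∞, where the sum runs over even integers 2k with 2 ≤ 2k ≤ M(x). -/
open Filter Finset

/-- `primePi x` is the number of primes `p ≤ x`. -/
noncomputable def primePi (x : ℝ) : ℕ :=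
  ((Finset.range (⌊x⌋₊ + 1)).filter Nat.Prime).card

/-- `piPair r x` is the number of primes `p ≤ x` such that `p + r` is also prime. -/
noncomputable def piPair (r : ℕ) (x : ℝ) : ℕ :=
  ((Finset.range (⌊x⌋₊ + 1)).filter (fun p => p.Prime ∧ (p + r).Prime)).card

lemma primePi_mono : Monotone primePi := by
  intro a b hab
  exact Finset.card_le_card (Finset.filter_subset_filter _ (by
    intro n hn
    simp only [Finset.mem_range] at *
    have := Nat.floor_le_floor hab
    omega))

lemma primePi_natCast (n : ℕ) : primePi (n : ℝ) = ((Finset.range (n+1)).filter Nat.Prime).card := by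
  simp [primePi]

lemma primePi_le (x : ℝ) (hx : 0 ≤ x) : (primePi x : ℝ) ≤ x + 1 := by
  have h1 : primePi x ≤ ⌊x⌋₊ + 1 := by
    calc primePi x ≤ (Finset.range (⌊x⌋₊ + 1)).card := Finset.card_filter_le _ _
    _ = ⌊x⌋₊ + 1 := Finset.card_range _
  calc (primePi x : ℝ) ≤ (⌊x⌋₊ : ℝ) + 1 := by exact_mod_cast h1
  _ ≤ x + 1 := by linarith [Nat.floor_le hx]

lemma piN_le_add {n m : ℕ} (h : n ≤ m) :
    ((Finset.range (m+1)).filter Nat.Prime).card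
      ≤ ((Finset.range (n+1)).filter Nat.Prime).card + (m - n) := by
  have hsub : (Finset.range (m+1)).filter Nat.Prime ⊆
      ((Finset.range (n+1)).filter Nat.Prime) ∪ Finset.Ico (n+1) (m+1) := by
    intro a ha
    simp only [Finset.mem_filter, Finset.mem_range, Finset.mem_union, Finset.mem_Ico] at *
    obtain ⟨h1, h2⟩ := ha
    by_cases hc : a < n + 1
    · exact Or.inl ⟨hc, h2⟩
    · exact Or.inr (by omega)
  calc ((Finset.range (m+1)).filter Nat.Prime).card
      ≤ (((Finset.range (n+1)).filter Nat.Prime) ∪ Finset.Ico (n+1) (m+1)).card :=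
        Finset.card_le_card hsub
    _ ≤ ((Finset.range (n+1)).filter Nat.Prime).card + (Finset.Ico (n+1) (m+1)).card :=
        Finset.card_union_le _ _
    _ = ((Finset.range (n+1)).filter Nat.Prime).card + (m - n) := by
        rw [Nat.card_Ico]
        omega

lemma primePi_sub_le {a b : ℝ} (ha : 0 ≤ a) (hab : a ≤ b) :
    (primePi b : ℝ) ≤ (primePi a : ℝ) + (b - a) + 1 := by
  have hfl : ⌊a⌋₊ ≤ ⌊b⌋₊ := Nat.floor_le_floor hab
  have := piN_le_add hfl
  have h2 : (primePi b : ℝ) ≤ (primePi a : ℝ) + ((⌊b⌋₊ : ℝ) - ⌊a⌋₊) := by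
    have : (primePi b : ℕ) ≤ primePi a + (⌊b⌋₊ - ⌊a⌋₊) := this
    have := (Nat.cast_le (α := ℝ)).2 this
    push_cast [Nat.cast_sub hfl] at this
    linarith
  have h3 : (⌊b⌋₊ : ℝ) ≤ b := Nat.floor_le (le_trans ha hab)
  have h4 : a - 1 < (⌊a⌋₊ : ℝ) := by
    have := Nat.lt_floor_add_one a
    linarith
  linarith

-- interval count
lemma primePi_Ioc (p N : ℕ) :
    ((Finset.Ioc p (p+N)).filter Nat.Prime).card + primePi (p : ℝ) = primePi ((p + N : ℕ) : ℝ) := by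
  rw [primePi_natCast, primePi_natCast]
  rw [← Finset.card_union_of_disjoint (by
    intro s hs1 hs2
    intro a ha
    have h1 := hs1 ha
    have h2 := hs2 ha
    simp only [Finset.mem_filter, Finset.mem_Ioc, Finset.mem_range] at h1 h2
    simp only [Finset.bot_eq_empty, Finset.notMem_empty]
    omega)]
  congr 1
  ext a
  simp only [Finset.mem_union, Finset.mem_filter, Finset.mem_Ioc, Finset.mem_range]
  constructor
  · rintro (⟨h1, h2⟩ | ⟨h1, h2⟩)
    · exact ⟨by omega, h2⟩
    · exact ⟨by omega, h2⟩
  · rintro ⟨h1, h2⟩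
    by_cases hc : p < a
    · exact Or.inl ⟨⟨hc, by omega⟩, h2⟩
    · exact Or.inr ⟨by omega, h2⟩

lemma sum_piPair_swap (x : ℝ) (K : ℕ) :
    ∑ k ∈ Finset.Icc 1 K, piPair (2 * k) x =
    ∑ p ∈ (Finset.range (⌊x⌋₊ + 1)).filter Nat.Prime,
      ((Finset.Icc 1 K).filter fun k => (p + 2 * k).Prime).card := by
  classical
  have h1 : ∀ k : ℕ, piPair (2 * k) x =
      ∑ p ∈ (Finset.range (⌊x⌋₊ + 1)).filter Nat.Prime,
        if (p + 2 * k).Prime then 1 else 0 := by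
    intro k
    rw [piPair, ← Finset.filter_filter, Finset.card_filter]
  simp_rw [h1]
  rw [Finset.sum_comm]
  refine Finset.sum_congr rfl fun p _ => ?_
  rw [Finset.card_filter]

lemma count_eq_interval (p K : ℕ) (hp : p.Prime) (hp2 : p ≠ 2) :
    ((Finset.Icc 1 K).filter fun k => (p + 2 * k).Prime).card
      = ((Finset.Ioc p (p + 2 * K)).filter Nat.Prime).card := by
  apply Finset.card_bij (fun k _ => p + 2 * k)
  · intro k hk
    simp only [Finset.mem_filter, Finset.mem_Icc, Finset.mem_Ioc] at *
    exact ⟨⟨by omega, by omega⟩, hk.2⟩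
  · intro a ha b hb hab
    omega
  · intro m hm
    simp only [Finset.mem_filter, Finset.mem_Ioc] at hm
    obtain ⟨⟨hm1, hm2⟩, hm3⟩ := hm
    have hpodd : p % 2 = 1 := Nat.odd_iff.1 (hp.odd_of_ne_two hp2)
    have hm4 : m ≠ 2 := by have := hp.two_le; omega
    have hmodd : m % 2 = 1 := Nat.odd_iff.1 (hm3.odd_of_ne_two hm4)
    refine ⟨(m - p) / 2, ?_, ?_⟩
    · simp only [Finset.mem_filter, Finset.mem_Icc]
      refine ⟨⟨by omega, by omega⟩, ?_⟩
      have : p + 2 * ((m - p) / 2) = m := by omega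
      rw [this]; exact hm3
    · omega

lemma log_ge_one {x : ℝ} (hx : 3 ≤ x) : 1 ≤ Real.log x := by
  have h3 : (1:ℝ) ≤ Real.log 3 := by
    rw [Real.le_log_iff_exp_le (by norm_num)]
    exact le_trans Real.exp_one_lt_d9.le (by norm_num)
  have := Real.log_le_log (by norm_num : (0:ℝ) < 3) hx
  linarith

set_option maxHeartbeats 1000000 in
lemma pnt_from_uniform
    (M : ℝ → ℝ)
    (hMle : ∀ᶠ x in atTop, M x ≤ x)
    (U : ∀ ε > (0:ℝ), ∃ Y : ℝ, ∀ y ≥ Y, ∀ t, M y ≤ t → t ≤ y →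
      |((primePi (y + t) : ℝ) - primePi y) - t / Real.log y| ≤ ε * (t / Real.log y)) :
    Tendsto (fun x => (primePi x : ℝ) * Real.log x / x) atTop (nhds 1) := by
  have aux : ∀ ε : ℝ, 0 < ε → ε ≤ 1/3 →
      ∀ᶠ x in atTop, |(primePi x : ℝ) * Real.log x / x - 1| ≤ 4*ε := by
    intro ε hε hε3
    obtain ⟨Y, hY⟩ := U ε hε
    obtain ⟨Y₀, hY₀⟩ := eventually_atTop.1 hMle
    set Y₁ : ℝ := max (max Y Y₀) 3 with hY₁
    have chain : ∀ n : ℕ, ∀ z : ℝ, Y₁ ≤ z →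
        ((primePi ((2:ℝ)^n * z) : ℝ) - primePi z ≤ (1+ε) * ((2:ℝ)^n * z - z) / Real.log z ∧
         (1-ε) * ((2:ℝ)^n * z - z) / Real.log ((2:ℝ)^n * z) ≤ (primePi ((2:ℝ)^n * z) : ℝ) - primePi z) := by
      intro n
      induction n with
      | zero =>
        intro z hz
        simp [pow_zero, one_mul, sub_self]
      | succ n ih =>
        intro z hz
        have hz3 : (3:ℝ) ≤ z := le_trans (le_max_right _ _) hz
        have hz0 : (0:ℝ) < z := by linarith
        have hLz : 1 ≤ Real.log z := log_ge_one hz3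
        have hpow1 : (1:ℝ) ≤ (2:ℝ)^n := one_le_pow₀ (by norm_num)
        set y : ℝ := (2:ℝ)^n * z with hy
        have hzy : z ≤ y := by
          rw [hy]
          nlinarith
        have hy3 : (3:ℝ) ≤ y := le_trans hz3 hzy
        have hLy : 1 ≤ Real.log y := log_ge_one hy3
        have hLzy : Real.log z ≤ Real.log y := Real.log_le_log hz0 hzy
        have hyY : Y ≤ y := le_trans (le_trans (le_max_left _ _) (le_max_left _ _)) (le_trans hz hzy)
        have hMy : M y ≤ y :=
          hY₀ y (le_trans (le_trans (le_max_right _ _) (le_max_left _ _)) (le_trans hz hzy))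
        have hU := hY y hyY y hMy (le_refl y)
        have hyy : (2:ℝ)^(n+1) * z = y + y := by rw [pow_succ]; ring
        obtain ⟨ih1, ih2⟩ := ih z hz
        have hup : (primePi (y + y) : ℝ) - primePi y ≤ (1+ε) * y / Real.log y := by
          have h1 := (abs_le.1 hU).2
          have h2 : (primePi (y + y) : ℝ) - primePi y ≤ y / Real.log y + ε * (y / Real.log y) := by
            linarith
          calc (primePi (y + y) : ℝ) - primePi y ≤ y / Real.log y + ε * (y / Real.log y) := h2
          _ = (1+ε) * y / Real.log y := by ring
        have hlo : (1-ε) * y / Real.log y ≤ (primePi (y + y) : ℝ) - primePi y := by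
          have h1 := (abs_le.1 hU).1
          calc (1-ε) * y / Real.log y = y / Real.log y - ε * (y / Real.log y) := by ring
          _ ≤ (primePi (y + y) : ℝ) - primePi y := by linarith
        constructor
        · rw [hyy]
          have hstep : (primePi (y + y) : ℝ) - primePi y ≤ (1+ε) * y / Real.log z := by
            calc (primePi (y + y) : ℝ) - primePi y ≤ (1+ε) * y / Real.log y := hup
            _ ≤ (1+ε) * y / Real.log z := by
                gcongr
                all_goals nlinarith
          calc (primePi (y + y) : ℝ) - primePi z
              = ((primePi (y + y) : ℝ) - primePi y) + ((primePi y : ℝ) - primePi z) := by ring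
          _ ≤ (1+ε) * y / Real.log z + (1+ε) * (y - z) / Real.log z := by
              have h1 := ih1
              rw [← hy] at h1
              linarith
          _ = (1+ε) * (y + y - z) / Real.log z := by ring
        · rw [hyy]
          have hLyy : Real.log y ≤ Real.log (y + y) := Real.log_le_log (by linarith) (by linarith)
          have h1 : (1-ε) * (y + y - z) / Real.log (y + y) ≤ (1-ε) * (y + y - z) / Real.log y := by
            gcongr
            all_goals nlinarith
          calc (1-ε) * (y + y - z) / Real.log (y + y) ≤ (1-ε) * (y + y - z) / Real.log y := h1
          _ = (1-ε) * y / Real.log y + (1-ε) * (y - z) / Real.log y := by ring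
          _ ≤ ((primePi (y + y) : ℝ) - primePi y) + ((primePi y : ℝ) - primePi z) := by
              have h2 := ih2
              rw [← hy] at h2
              linarith
          _ = (primePi (y + y) : ℝ) - primePi z := by ring
    -- eventual conditions
    have hev2 : ∀ᶠ x in atTop, Real.log x ^ 3 ≤ x ^ (1/2:ℝ) := by
      have h := (isLittleO_log_rpow_atTop (by norm_num : (0:ℝ) < 1/6)).bound (c := 1) (by norm_num)
      filter_upwards [h, eventually_ge_atTop 1] with x hx hx1
      have hx0 : (0:ℝ) < x := by linarith
      have hl0 : 0 ≤ Real.log x := Real.log_nonneg hx1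
      have hr0 : (0:ℝ) ≤ x ^ (1/6:ℝ) := Real.rpow_nonneg hx0.le _
      have h1 : Real.log x ≤ x ^ (1/6:ℝ) := by
        rw [Real.norm_eq_abs, Real.norm_eq_abs, abs_of_nonneg hl0, abs_of_nonneg hr0] at hx
        linarith
      calc Real.log x ^ 3 ≤ (x ^ (1/6:ℝ)) ^ 3 := pow_le_pow_left₀ hl0 h1 3
      _ = x ^ (1/2:ℝ) := by
          rw [← Real.rpow_natCast (x ^ (1/6:ℝ)) 3, ← Real.rpow_mul hx0.le]
          norm_num
    have hev3 : ∀ᶠ x in atTop, Y₁ + 3 ≤ x ^ (1/2:ℝ) :=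
      (tendsto_rpow_atTop (by norm_num : (0:ℝ) < 1/2)).eventually_ge_atTop (Y₁ + 3)
    have hev4 : ∀ᶠ x in atTop, Real.log (Real.log x) / Real.log x ≤ ε/(3*(1+ε)) := by
      have t : Tendsto (fun x : ℝ => Real.log (Real.log x) / Real.log x) atTop (nhds 0) :=
        (Real.isLittleO_log_id_atTop.tendsto_div_nhds_zero).comp Real.tendsto_log_atTop
      have h := (tendsto_order.1 t).2 (ε/(3*(1+ε))) (by positivity)
      exact h.mono fun x hx => le_of_lt hx
    have hev5 : ∀ᶠ x in atTop, max 2 (4/ε) ≤ Real.log x :=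
      Real.tendsto_log_atTop.eventually_ge_atTop _
    have hev6 : ∀ᶠ x in atTop, Real.log x / x ≤ ε/2 := by
      have t := Real.isLittleO_log_id_atTop.tendsto_div_nhds_zero
      have h := (tendsto_order.1 t).2 (ε/2) (by positivity)
      exact h.mono fun x hx => le_of_lt hx
    filter_upwards [hev2, hev3, hev4, hev5, hev6, eventually_ge_atTop 3]
      with x h2 h3 h4 h5 h6 hx3
    have hx0 : (0:ℝ) < x := by linarith
    have hL1 : 1 ≤ Real.log x := log_ge_one hx3
    have hL2 : 2 ≤ Real.log x := le_trans (le_max_left _ _) h5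
    have hLε : 4/ε ≤ Real.log x := le_trans (le_max_right _ _) h5
    have hL0 : (0:ℝ) < Real.log x := by linarith
    have hL3pos : (0:ℝ) < Real.log x ^ 3 := by positivity
    have hL31 : (1:ℝ) ≤ Real.log x ^ 3 := one_le_pow₀ hL1
    set n : ℕ := ⌊Real.logb 2 (Real.log x ^ 3)⌋₊ with hn
    have hlogb0 : 0 ≤ Real.logb 2 (Real.log x ^ 3) := Real.logb_nonneg (by norm_num) hL31
    have h2n_le : (2:ℝ)^n ≤ Real.log x ^ 3 := by
      have h1 : ((n:ℝ)) ≤ Real.logb 2 (Real.log x ^ 3) := Nat.floor_le hlogb0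
      calc (2:ℝ)^n = (2:ℝ)^((n:ℝ)) := (Real.rpow_natCast 2 n).symm
      _ ≤ (2:ℝ)^(Real.logb 2 (Real.log x ^ 3)) :=
          Real.rpow_le_rpow_of_exponent_le (by norm_num) h1
      _ = Real.log x ^ 3 := Real.rpow_logb (by norm_num) (by norm_num) hL3pos
    have h2n_gt : Real.log x ^ 3 < (2:ℝ)^(n+1) := by
      have h1 : Real.logb 2 (Real.log x ^ 3) < (n:ℝ) + 1 := Nat.lt_floor_add_one _
      calc Real.log x ^ 3 = (2:ℝ)^(Real.logb 2 (Real.log x ^ 3)) :=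
            (Real.rpow_logb (by norm_num) (by norm_num) hL3pos).symm
      _ < (2:ℝ)^((n:ℝ)+1) := Real.rpow_lt_rpow_of_exponent_lt (by norm_num) h1
      _ = (2:ℝ)^(n+1) := by
          rw [← Real.rpow_natCast 2 (n+1)]
          push_cast
          ring_nf
    have h2npos : (0:ℝ) < (2:ℝ)^n := by positivity
    set z : ℝ := x / (2:ℝ)^n with hz
    have hz0 : 0 < z := by positivity
    have hzx : (2:ℝ)^n * z = x := by
      rw [hz, mul_comm, div_mul_cancel₀ _ (ne_of_gt h2npos)]
    have hz_ge : x / Real.log x ^ 3 ≤ z := by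
      rw [hz]
      gcongr
    have hz_le : z ≤ 2 * x / Real.log x ^ 3 := by
      rw [hz, div_le_div_iff₀ h2npos hL3pos]
      have h1 : Real.log x ^ 3 ≤ 2 * (2:ℝ)^n := by
        have h2' := h2n_gt
        rw [pow_succ (2:ℝ) n] at h2'
        linarith
      nlinarith [mul_le_mul_of_nonneg_left h1 hx0.le]
    have hxhalf : x ^ (1/2:ℝ) ≤ x / Real.log x ^ 3 := by
      have hrw : x / x ^ (1/2:ℝ) = x ^ (1/2:ℝ) := by
        nth_rewrite 1 [← Real.rpow_one x]
        rw [← Real.rpow_sub hx0]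
        norm_num
      calc x ^ (1/2:ℝ) = x / x ^ (1/2:ℝ) := hrw.symm
      _ ≤ x / Real.log x ^ 3 := by
          gcongr
          all_goals positivity
    have hzY : Y₁ ≤ z := by
      have h1 : Y₁ + 3 ≤ x ^ (1/2:ℝ) := h3
      linarith [hz_ge, hxhalf]
    obtain ⟨hup, hlo⟩ := chain n z hzY
    rw [hzx] at hup hlo
    have hz3 : (3:ℝ) ≤ z := le_trans (le_max_right _ _) hzY
    have hLz1 : 1 ≤ Real.log z := log_ge_one hz3
    have hLz0 : (0:ℝ) < Real.log z := by linarith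
    have hlogL0 : 0 ≤ Real.log (Real.log x) := Real.log_nonneg hL1
    have hLz_ge : Real.log x - 3 * Real.log (Real.log x) ≤ Real.log z := by
      have h1 : Real.log (x / Real.log x ^ 3) ≤ Real.log z :=
        Real.log_le_log (by positivity) hz_ge
      have h2' : Real.log (x / Real.log x ^ 3) = Real.log x - 3 * Real.log (Real.log x) := by
        rw [Real.log_div (ne_of_gt hx0) (ne_of_gt hL3pos), Real.log_pow]
        push_cast
        ring
      linarith
    have h3logL : 3 * (1+ε) * Real.log (Real.log x) ≤ ε * Real.log x := by
      rw [div_le_iff₀ hL0] at h4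
      have hε1 : (0:ℝ) < 1 + ε := by linarith
      calc 3*(1+ε)*Real.log (Real.log x) ≤ 3*(1+ε)*(ε/(3*(1+ε)) * Real.log x) := by
            apply mul_le_mul_of_nonneg_left h4 (by positivity)
      _ = ε * Real.log x := by field_simp
    have hratio : Real.log x / Real.log z ≤ 1 + ε := by
      rw [div_le_iff₀ hLz0]
      calc Real.log x ≤ (1+ε)*(Real.log x - 3*Real.log (Real.log x)) := by linarith [h3logL]
      _ ≤ (1+ε)*Real.log z := mul_le_mul_of_nonneg_left hLz_ge (by linarith)
    have hpz : (primePi z : ℝ) ≤ z + 1 := primePi_le z hz0.le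
    have hπx_up : (primePi x : ℝ) ≤ (z+1) + (1+ε) * x / Real.log z := by
      have h1 : (primePi x : ℝ) - primePi z ≤ (1+ε)*(x - z)/Real.log z := hup
      have h2' : (1+ε)*(x-z)/Real.log z ≤ (1+ε)*x/Real.log z := by
        gcongr
        all_goals linarith
      linarith
    have hg_up : (primePi x : ℝ) * Real.log x / x ≤
        (z+1)*Real.log x/x + (1+ε)*(Real.log x/Real.log z) := by
      have h1 : (primePi x:ℝ)*Real.log x/x ≤ ((z+1) + (1+ε)*x/Real.log z)*Real.log x/x := by
        gcongr
        all_goals first | exact hπx_up | positivity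
      have h2' : ((z+1) + (1+ε)*x/Real.log z)*Real.log x/x
          = (z+1)*Real.log x/x + (1+ε)*(Real.log x/Real.log z) := by
        field_simp
      linarith
    have hterm1 : (z+1)*Real.log x/x ≤ ε := by
      have h1 : (z+1)*Real.log x/x ≤ (2*x/Real.log x^3 + 1)*Real.log x/x := by
        gcongr
      have h2' : (2*x/Real.log x^3 + 1)*Real.log x/x = 2/Real.log x^2 + Real.log x/x := by
        field_simp
      have h4' : 4 ≤ ε * Real.log x := by
        have := (div_le_iff₀ hε).1 hLε
        linarith
      have h3' : 2/Real.log x^2 ≤ ε/2 := by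
        rw [div_le_iff₀ (by positivity)]
        nlinarith
      linarith [h6]
    have hup_final : (primePi x : ℝ)*Real.log x/x ≤ 1 + 4*ε := by
      have h1 : (1+ε)*(Real.log x/Real.log z) ≤ (1+ε)*(1+ε) :=
        mul_le_mul_of_nonneg_left hratio (by linarith)
      nlinarith [hg_up, hterm1, hε, hε3]
    have h5' : z/x ≤ ε := by
      have h7' : 2/Real.log x^3 ≤ ε := by
        rw [div_le_iff₀ (by positivity)]
        have h4' : 4 ≤ ε * Real.log x := by
          have := (div_le_iff₀ hε).1 hLε
          linarith
        have h8' : ε * Real.log x * 1 ≤ ε * Real.log x * Real.log x ^ 2 :=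
          mul_le_mul_of_nonneg_left (one_le_pow₀ hL1) (by positivity)
        nlinarith [h4', h8']
      calc z/x ≤ (2*x/Real.log x^3)/x := by gcongr
      _ = 2/Real.log x^3 := by field_simp
      _ ≤ ε := h7'
    have hlo_final : 1 - 2*ε ≤ (primePi x:ℝ)*Real.log x/x := by
      have h1 : (0:ℝ) ≤ (primePi z : ℝ) := Nat.cast_nonneg _
      have h2' : (1-ε)*(x-z)/Real.log x ≤ (primePi x:ℝ) := by linarith
      have h3' : (1-ε)*(x-z)/Real.log x * Real.log x / x = (1-ε)*(1 - z/x) := by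
        field_simp
      have h4' : (1-ε)*(x-z)/Real.log x * Real.log x / x ≤ (primePi x:ℝ)*Real.log x/x := by
        gcongr ?_ * Real.log x / x
      rw [h3'] at h4'
      nlinarith [h5', hε, hε3]
    rw [abs_le]
    constructor
    · linarith
    · linarith
  rw [Metric.tendsto_nhds]
  intro δ hδ
  have hεp : 0 < min (δ/5) (1/3) := lt_min (by positivity) (by norm_num)
  filter_upwards [aux (min (δ/5) (1/3)) hεp (min_le_right _ _)] with x hx
  rw [Real.dist_eq]
  have h1 : 4 * min (δ/5) (1/3) ≤ 4*(δ/5) := by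
    have := min_le_left (δ/5) (1/3)
    linarith
  calc |(primePi x : ℝ) * Real.log x / x - 1| ≤ 4 * min (δ/5) (1/3) := hx
  _ ≤ 4*(δ/5) := h1
  _ < δ := by linarith

lemma uniform_short_interval
    (M : ℝ → ℝ) (hpos : ∀ x, 0 < M x)
    (hMle : ∀ᶠ x in atTop, M x ≤ x)
    (hhyp : ∀ h : ℝ → ℝ, (∀ᶠ x in atTop, M x ≤ h x ∧ h x ≤ x) →
      Tendsto (fun x => ((primePi (x + h x) : ℝ) - (primePi x : ℝ)) / (h x / Real.log x))
        atTop (nhds 1)) :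
    ∀ ε > (0:ℝ), ∃ Y : ℝ, ∀ y ≥ Y, ∀ t, M y ≤ t → t ≤ y →
      |((primePi (y + t) : ℝ) - primePi y) - t / Real.log y| ≤ ε * (t / Real.log y) := by
  intro ε hε
  by_contra hcon
  push_neg at hcon
  classical
  set bad : ℝ → Prop := fun y => ∃ t, M y ≤ t ∧ t ≤ y ∧
    ε * (t / Real.log y) < |((primePi (y + t) : ℝ) - primePi y) - t / Real.log y| with hbad
  set h : ℝ → ℝ := fun y => if hy : bad y then hy.choose else M y with hh
  have hMh : ∀ y, M y ≤ h y := by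
    intro y
    rw [hh]
    by_cases hy : bad y
    · simp only [dif_pos hy]; exact hy.choose_spec.1
    · simp only [dif_neg hy, le_refl]
  have hprem : ∀ᶠ x in atTop, M x ≤ h x ∧ h x ≤ x := by
    filter_upwards [hMle] with y hy
    refine ⟨hMh y, ?_⟩
    rw [hh]
    by_cases hb : bad y
    · simp only [dif_pos hb]; exact hb.choose_spec.2.1
    · simp only [dif_neg hb]; exact hy
  have htend := hhyp h hprem
  have hev : ∀ᶠ y in atTop,
      |((primePi (y + h y) : ℝ) - primePi y) / (h y / Real.log y) - 1| < ε := by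
    have := Metric.tendsto_nhds.mp htend ε hε
    simpa [Real.dist_eq] using this
  have hfreq : ∃ᶠ y in atTop, bad y := by
    rw [frequently_atTop]
    intro Y
    obtain ⟨y, hy1, t, ht⟩ := hcon Y
    exact ⟨y, hy1, t, ht⟩
  have hfreq2 : ∃ᶠ y in atTop, (bad y ∧ 2 ≤ y) ∧
      |((primePi (y + h y) : ℝ) - primePi y) / (h y / Real.log y) - 1| < ε :=
    (hfreq.and_eventually (eventually_ge_atTop 2)).and_eventually hev
  obtain ⟨y, ⟨hb, hy2⟩, hlt⟩ := hfreq2.exists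
  have hhy : h y = hb.choose := by rw [hh]; simp only [dif_pos hb]
  obtain ⟨ht1, ht2, ht3⟩ := hb.choose_spec
  set t := hb.choose
  have hL : 0 < Real.log y := Real.log_pos (by linarith)
  have hT : 0 < t / Real.log y := by
    have : 0 < t := lt_of_lt_of_le (hpos y) ht1
    positivity
  set D : ℝ := (primePi (y + t) : ℝ) - primePi y
  set T : ℝ := t / Real.log y
  have key : ε < |D - T| / T := by
    rw [lt_div_iff₀ hT]
    exact ht3
  have hstep : D / T - 1 = (D - T) / T := by
    field_simp
  rw [hhy] at hlt
  rw [hstep, abs_div, abs_of_pos hT] at hlt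
  exact absurd (lt_trans key hlt) (lt_irrefl _)

lemma M_div_log_atTop
    (M : ℝ → ℝ) (hpos : ∀ x, 0 < M x)
    (hMo : M =o[atTop] fun x => x / (Real.log x) ^ 2)
    (hhyp : ∀ h : ℝ → ℝ, (∀ᶠ x in atTop, M x ≤ h x ∧ h x ≤ x) →
      Tendsto (fun x => ((primePi (x + h x) : ℝ) - (primePi x : ℝ)) / (h x / Real.log x))
        atTop (nhds 1)) :
    Tendsto (fun x => M x / Real.log x) atTop atTop := by
  rw [tendsto_atTop]
  intro C
  by_contra hC
  have hfreq : ∃ᶠ x in atTop, M x / Real.log x < C := by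
    rw [Filter.not_eventually] at hC
    apply hC.mono
    intro x hx
    exact lt_of_not_ge hx
  set C' : ℝ := max C 0 with hC'
  set h : ℝ → ℝ := fun x => ((⌊M x / Real.log x⌋₊ : ℝ) + 3/2) * Real.log x with hh
  have hMo' := hMo.bound (c := 1/4) (by norm_num)
  have hlog : ∀ᶠ x in atTop, Real.log x ≤ x / 3 := by
    have h1 : Real.log =o[atTop] (id : ℝ → ℝ) := Real.isLittleO_log_id_atTop
    have := h1.bound (c := 1/3) (by norm_num)
    filter_upwards [this, eventually_ge_atTop 1] with x hx hx1
    rw [id] at hx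
    calc Real.log x ≤ |Real.log x| := le_abs_self _
    _ ≤ 1/3 * |x| := hx
    _ = x / 3 := by rw [abs_of_nonneg (by linarith)]; ring
  have hprem : ∀ᶠ x in atTop, M x ≤ h x ∧ h x ≤ x := by
    filter_upwards [hMo', hlog, eventually_ge_atTop 3] with x hx hlx hx3
    have hL1 : 1 ≤ Real.log x := by
      have h3 : (1:ℝ) ≤ Real.log 3 := by
        rw [Real.le_log_iff_exp_le (by norm_num)]
        exact le_trans Real.exp_one_lt_d9.le (by norm_num)
      have := Real.log_le_log (by norm_num : (0:ℝ) < 3) hx3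
      linarith
    have hL0 : 0 < Real.log x := by linarith
    have ha0 : 0 ≤ M x / Real.log x := le_of_lt (div_pos (hpos x) hL0)
    constructor
    · have h1 : M x / Real.log x < (⌊M x / Real.log x⌋₊ : ℝ) + 1 := Nat.lt_floor_add_one _
      have h2 : M x / Real.log x ≤ (⌊M x / Real.log x⌋₊ : ℝ) + 3/2 := by linarith
      calc M x = (M x / Real.log x) * Real.log x := by field_simp
      _ ≤ ((⌊M x / Real.log x⌋₊ : ℝ) + 3/2) * Real.log x :=
          mul_le_mul_of_nonneg_right h2 (le_of_lt hL0)
    · have h1 : (⌊M x / Real.log x⌋₊ : ℝ) ≤ M x / Real.log x := Nat.floor_le ha0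
      have hMx : M x ≤ x / 4 := by
        have hxpos : (0:ℝ) < x := by linarith
        have : |M x| ≤ 1/4 * |x / Real.log x ^ 2| := hx
        have h2 : |x / Real.log x ^ 2| = x / Real.log x ^ 2 := abs_of_pos (by positivity)
        have h3 : x / Real.log x ^ 2 ≤ x := by
          rw [div_le_iff₀ (by positivity)]
          have hsq : 1 ≤ Real.log x ^ 2 := by nlinarith
          nlinarith [mul_le_mul_of_nonneg_left hsq hxpos.le]
        calc M x ≤ |M x| := le_abs_self _
        _ ≤ 1/4 * (x / Real.log x ^ 2) := by rw [← h2]; exact this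
        _ ≤ 1/4 * x := by linarith
        _ = x / 4 := by ring
      calc h x ≤ (M x / Real.log x + 3/2) * Real.log x := by
            apply mul_le_mul_of_nonneg_right _ (le_of_lt hL0)
            linarith
      _ = M x + 3/2 * Real.log x := by field_simp
      _ ≤ x / 4 + 3/2 * (x / 3) := by
            have := hlx
            nlinarith
      _ ≤ x := by linarith
  have htend := hhyp h hprem
  have hev : ∀ᶠ y in atTop,
      |((primePi (y + h y) : ℝ) - primePi y) / (h y / Real.log y) - 1| < 1/(2*(C'+2)) := by
    have hd : (0:ℝ) < 1/(2*(C'+2)) := by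
      have : (0:ℝ) ≤ C' := le_max_right _ _
      positivity
    have := Metric.tendsto_nhds.mp htend _ hd
    simpa [Real.dist_eq] using this
  have hfreq2 : ∃ᶠ x in atTop, (M x / Real.log x < C ∧ 3 ≤ x) ∧
      |((primePi (x + h x) : ℝ) - primePi x) / (h x / Real.log x) - 1| < 1/(2*(C'+2)) :=
    (hfreq.and_eventually (eventually_ge_atTop 3)).and_eventually hev
  obtain ⟨x, ⟨hxC, hx3⟩, hlt⟩ := hfreq2.exists
  have hL1 : 1 ≤ Real.log x := by
    have h3 : (1:ℝ) ≤ Real.log 3 := by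
      rw [Real.le_log_iff_exp_le (by norm_num)]
      exact le_trans Real.exp_one_lt_d9.le (by norm_num)
    have := Real.log_le_log (by norm_num : (0:ℝ) < 3) hx3
    linarith
  have hL0 : 0 < Real.log x := by linarith
  set n : ℕ := ⌊M x / Real.log x⌋₊ with hn
  have hTval : h x / Real.log x = (n : ℝ) + 3/2 := by
    simp only [hh]
    rw [← hn, mul_div_assoc, div_self (ne_of_gt hL0), mul_one]
  have hhx0 : 0 ≤ h x := by
    rw [hh]
    positivity
  have hmono := Finset.card_le_card (α := ℕ) (s := (Finset.range (⌊x⌋₊ + 1)).filter Nat.Prime)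
    (t := (Finset.range (⌊x + h x⌋₊ + 1)).filter Nat.Prime) (Finset.filter_subset_filter _ (by
      intro a ha
      simp only [Finset.mem_range] at *
      have := Nat.floor_le_floor (le_add_of_nonneg_right hhx0 : x ≤ x + h x)
      omega))
  set a : ℕ := primePi (x + h x)
  set b : ℕ := primePi x
  have hab : b ≤ a := hmono
  set m : ℕ := a - b with hm
  have hD : (a : ℝ) - (b : ℝ) = (m : ℝ) := by
    rw [hm]
    push_cast [Nat.cast_sub hab]
    ring
  have hnC : (n : ℝ) < C' := by
    have h1 : (n : ℝ) ≤ M x / Real.log x := Nat.floor_le (le_of_lt (div_pos (hpos x) hL0))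
    calc (n:ℝ) ≤ M x / Real.log x := h1
    _ < C := hxC
    _ ≤ C' := le_max_left _ _
  have hint : (1:ℝ)/2 ≤ |(m : ℝ) - ((n:ℝ) + 3/2)| := by
    rcases le_or_gt m (n+1) with hc | hc
    · have : (m:ℝ) ≤ (n:ℝ) + 1 := by exact_mod_cast hc
      rw [abs_sub_comm, abs_of_pos (by linarith)]
      linarith
    · have : (n:ℝ) + 2 ≤ (m:ℝ) := by exact_mod_cast hc
      rw [abs_of_pos (by linarith)]
      linarith
  have hT : (0:ℝ) < (n:ℝ) + 3/2 := by positivity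
  have hstep : ((a:ℝ) - b) / (h x / Real.log x) - 1 = ((m:ℝ) - ((n:ℝ)+3/2)) / ((n:ℝ)+3/2) := by
    rw [hTval, hD]
    field_simp
  rw [hstep, abs_div, abs_of_pos hT] at hlt
  have hge : 1/(2*(C'+2)) ≤ |(m:ℝ) - ((n:ℝ)+3/2)| / ((n:ℝ)+3/2) := by
    rw [le_div_iff₀ hT]
    calc 1/(2*(C'+2)) * ((n:ℝ)+3/2) ≤ 1/(2*(C'+2)) * (C'+2) := by
          apply mul_le_mul_of_nonneg_left (by linarith) (by positivity)
    _ = 1/2 := by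
          have : (0:ℝ) ≤ C' := le_max_right _ _
          field_simp
    _ ≤ |(m:ℝ) - ((n:ℝ)+3/2)| := hint
  linarith

lemma ineq_lo (e R : ℝ) (he : 0 < e) (he4 : e ≤ 1/4) (h : (1-2*e)*(1-2*e) ≤ R) :
    -(8*e) ≤ R - 1 := by nlinarith

lemma ineq_up (e R : ℝ) (he : 0 < e) (he4 : e ≤ 1/4) (h : R ≤ (1+e)*((1+e)*(1+e)) + e) :
    R - 1 ≤ 8*e := by
  have h1 : e*e ≤ e*(1/4) := mul_le_mul_of_nonneg_left he4 he.le
  have h2 : e*(e*e) ≤ e*(e*(1/4)) := mul_le_mul_of_nonneg_left h1 he.le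
  nlinarith [h1, h2]

set_option maxHeartbeats 2000000 in
lemma averaged_hardy_littlewood_aux
    (M : ℝ → ℝ) (hpos : ∀ x, 0 < M x) (hmono : Monotone M)
    (htop : Tendsto M atTop atTop)
    (hMo : M =o[atTop] fun x => x / (Real.log x) ^ 2)
    (hhyp : ∀ h : ℝ → ℝ, (∀ᶠ x in atTop, M x ≤ h x ∧ h x ≤ x) →
      Tendsto (fun x => ((primePi (x + h x) : ℝ) - (primePi x : ℝ)) / (h x / Real.log x))
        atTop (nhds 1))
    (U : ∀ ε > (0:ℝ), ∃ Y : ℝ, ∀ y ≥ Y, ∀ t, M y ≤ t → t ≤ y →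
      |((primePi (y + t) : ℝ) - primePi y) - t / Real.log y| ≤ ε * (t / Real.log y))
    (hpnt : Tendsto (fun x => (primePi x : ℝ) * Real.log x / x) atTop (nhds 1))
    (hMlog : Tendsto (fun x => M x / Real.log x) atTop atTop)
    (hMle : ∀ᶠ x in atTop, M x ≤ x) :
    Tendsto (fun x =>
        ((2 / M x) * ∑ k ∈ Finset.Icc 1 ⌊M x / 2⌋₊, (piPair (2 * k) x : ℝ)) /
          (2 * x / (Real.log x) ^ 2))
      atTop (nhds 1) := by
  have aux2 : ∀ ε : ℝ, 0 < ε → ε ≤ 1/4 → ∀ᶠ x in atTop,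
      |((2 / M x) * ∑ k ∈ Finset.Icc 1 ⌊M x / 2⌋₊, (piPair (2 * k) x : ℝ)) /
          (2 * x / (Real.log x) ^ 2) - 1| ≤ 8*ε := by
    intro ε hε hε4
    obtain ⟨Y, hY⟩ := U ε hε
    have hev2 : ∀ᶠ x in atTop, Real.log x ^ 3 ≤ x ^ (1/2:ℝ) := by
      have h := (isLittleO_log_rpow_atTop (by norm_num : (0:ℝ) < 1/6)).bound (c := 1) (by norm_num)
      filter_upwards [h, eventually_ge_atTop 1] with x hx hx1
      have hx0 : (0:ℝ) < x := by linarith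
      have hl0 : 0 ≤ Real.log x := Real.log_nonneg hx1
      have hr0 : (0:ℝ) ≤ x ^ (1/6:ℝ) := Real.rpow_nonneg hx0.le _
      have h1 : Real.log x ≤ x ^ (1/6:ℝ) := by
        rw [Real.norm_eq_abs, Real.norm_eq_abs, abs_of_nonneg hl0, abs_of_nonneg hr0] at hx
        linarith
      calc Real.log x ^ 3 ≤ (x ^ (1/6:ℝ)) ^ 3 := pow_le_pow_left₀ hl0 h1 3
      _ = x ^ (1/2:ℝ) := by
          rw [← Real.rpow_natCast (x ^ (1/6:ℝ)) 3, ← Real.rpow_mul hx0.le]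
          norm_num
    have hev3 : ∀ᶠ x in atTop, max (Y + 3) (2/ε) ≤ x ^ (1/2:ℝ) :=
      (tendsto_rpow_atTop (by norm_num : (0:ℝ) < 1/2)).eventually_ge_atTop _
    have hev4 : ∀ᶠ x in atTop, Real.log (Real.log x) / Real.log x ≤ ε/(3*(1+ε)) := by
      have t : Tendsto (fun x : ℝ => Real.log (Real.log x) / Real.log x) atTop (nhds 0) :=
        (Real.isLittleO_log_id_atTop.tendsto_div_nhds_zero).comp Real.tendsto_log_atTop
      have h := (tendsto_order.1 t).2 (ε/(3*(1+ε))) (by positivity)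
      exact h.mono fun x hx => le_of_lt hx
    have hev5 : ∀ᶠ x in atTop, max 2 (2/ε) ≤ Real.log x :=
      Real.tendsto_log_atTop.eventually_ge_atTop _
    have hpnt_ev : ∀ᶠ x in atTop, |(primePi x : ℝ) * Real.log x / x - 1| < ε := by
      have h := Metric.tendsto_nhds.mp hpnt ε hε
      simpa [Real.dist_eq] using h
    have hc_ev : ∀ᶠ x in atTop, 3/ε ≤ M x / Real.log x := hMlog.eventually_ge_atTop _
    have hMo_ev := hMo.bound (c := ε/2) (by positivity)
    filter_upwards [hev2, hev3, hev4, hev5, hpnt_ev, hc_ev, hMo_ev, hMle, eventually_ge_atTop 3]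
      with x h2 h3 h4 h5 hpnt_x hc hMo_x hMle_x hx3
    have hx0 : (0:ℝ) < x := by linarith
    have hl1 : 1 ≤ Real.log x := log_ge_one hx3
    have hl2 : 2 ≤ Real.log x := le_trans (le_max_left _ _) h5
    have hl0 : (0:ℝ) < Real.log x := by linarith
    have hlε : 2/ε ≤ Real.log x := le_trans (le_max_right _ _) h5
    have hm0 : 0 < M x := hpos x
    have hl3pos : (0:ℝ) < Real.log x ^ 3 := by positivity
    have hl31 : (1:ℝ) ≤ Real.log x ^ 3 := one_le_pow₀ hl1
    have hεml : 3 ≤ ε * (M x / Real.log x) := by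
      have h1 := (div_le_iff₀ hε).1 hc
      linarith
    have hm12 : (12:ℝ) ≤ M x := by
      have h1 : 3/ε * Real.log x ≤ M x := (le_div_iff₀ hl0).1 hc
      have h12 : (12:ℝ) ≤ 3/ε := by
        rw [le_div_iff₀ hε]
        linarith
      have h2a : 3/ε * 1 ≤ 3/ε * Real.log x :=
        mul_le_mul_of_nonneg_left hl1 (by positivity)
      linarith
    set y0 : ℝ := max (M x) (x / Real.log x ^ 3) with hy0
    have hy0m : M x ≤ y0 := le_max_left _ _
    have hy0x : x / Real.log x ^ 3 ≤ y0 := le_max_right _ _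
    have hxl3pos : 0 < x / Real.log x ^ 3 := by positivity
    have hy0pos : 0 < y0 := lt_of_lt_of_le hm0 hy0m
    have hy0lex : y0 ≤ x := by
      rw [hy0, max_le_iff]
      refine ⟨hMle_x, ?_⟩
      rw [div_le_iff₀ hl3pos]
      have h2a : x * 1 ≤ x * Real.log x ^ 3 :=
        mul_le_mul_of_nonneg_left hl31 hx0.le
      linarith
    have hxhalf : x ^ (1/2:ℝ) ≤ x / Real.log x ^ 3 := by
      have hrw : x / x ^ (1/2:ℝ) = x ^ (1/2:ℝ) := by
        nth_rewrite 1 [← Real.rpow_one x]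
        rw [← Real.rpow_sub hx0]
        norm_num
      calc x ^ (1/2:ℝ) = x / x ^ (1/2:ℝ) := hrw.symm
      _ ≤ x / Real.log x ^ 3 := by
          gcongr
          all_goals positivity
    have hy0Y : Y + 3 ≤ y0 :=
      le_trans (le_trans (le_max_left _ _) h3) (le_trans hxhalf hy0x)
    -- log of the threshold
    have hlogL0 : 0 ≤ Real.log (Real.log x) := Real.log_nonneg hl1
    have hLy0ge : Real.log x - 3 * Real.log (Real.log x) ≤ Real.log y0 := by
      have h1 : Real.log (x / Real.log x ^ 3) ≤ Real.log y0 :=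
        Real.log_le_log hxl3pos hy0x
      have h2' : Real.log (x / Real.log x ^ 3)
          = Real.log x - 3 * Real.log (Real.log x) := by
        rw [Real.log_div (ne_of_gt hx0) (ne_of_gt hl3pos), Real.log_pow]
        push_cast
        ring
      linarith
    have h3logL : 3 * (1+ε) * Real.log (Real.log x) ≤ ε * Real.log x := by
      rw [div_le_iff₀ hl0] at h4
      calc 3*(1+ε)*Real.log (Real.log x)
          ≤ 3*(1+ε)*(ε/(3*(1+ε)) * Real.log x) := by
            apply mul_le_mul_of_nonneg_left h4 (by positivity)
      _ = ε * Real.log x := by field_simp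
    have hL1pos : 0 < Real.log y0 := by
      have hεl : ε * Real.log x ≤ 1/4 * Real.log x :=
        mul_le_mul_of_nonneg_right hε4 hl0.le
      have hεB : 0 ≤ ε * Real.log (Real.log x) := by positivity
      linarith [h3logL, hLy0ge]
    have hll : Real.log x ≤ (1+ε) * Real.log y0 := by
      have h1 : Real.log x ≤ (1+ε)*(Real.log x - 3*Real.log (Real.log x)) := by
        linarith [h3logL]
      calc Real.log x ≤ (1+ε)*(Real.log x - 3*Real.log (Real.log x)) := h1
      _ ≤ (1+ε)*Real.log y0 := mul_le_mul_of_nonneg_left hLy0ge (by linarith)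
    -- smallness of threshold contribution
    have hMxl : M x * Real.log x ^ 2 / x ≤ ε/2 := by
      have h1 : |x / Real.log x^2| = x / Real.log x^2 := abs_of_pos (by positivity)
      rw [Real.norm_eq_abs, Real.norm_eq_abs, h1, abs_of_pos hm0] at hMo_x
      rw [div_le_iff₀ hx0]
      calc M x * Real.log x ^ 2 ≤ (ε/2 * (x / Real.log x^2)) * Real.log x ^2 := by
            apply mul_le_mul_of_nonneg_right hMo_x (by positivity)
      _ = ε/2 * x := by field_simp
    have hxl : (x / Real.log x ^ 3) * Real.log x ^ 2 / x = 1 / Real.log x := by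
      field_simp
    have hinvl : 1 / Real.log x ≤ ε/2 := by
      rw [div_le_iff₀ hl0]
      have h1 := (div_le_iff₀ hε).1 hlε
      linarith
    have hl2x : Real.log x ^ 2 / x ≤ ε/2 := by
      have h1 : Real.log x ^ 2 ≤ Real.log x ^ 3 := by
        have h2a : Real.log x ^ 2 * 1 ≤ Real.log x ^ 2 * Real.log x :=
          mul_le_mul_of_nonneg_left hl1 (by positivity)
        calc Real.log x ^ 2 = Real.log x ^ 2 * 1 := by ring
        _ ≤ Real.log x ^ 2 * Real.log x := h2a
        _ = Real.log x ^ 3 := by ring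
      have h3' : x ^ (1/2:ℝ) * x ^ (1/2:ℝ) = x := by
        rw [← Real.rpow_add hx0]
        norm_num
      have hrpos : 0 < x ^ (1/2:ℝ) := Real.rpow_pos_of_pos hx0 _
      have h4' : 2/ε ≤ x ^ (1/2:ℝ) := le_trans (le_max_right _ _) h3
      rw [div_le_iff₀ hx0]
      have h5' : x ^ (1/2:ℝ) ≤ ε/2 * x := by
        have h6' : (1:ℝ) ≤ ε/2 * x ^ (1/2:ℝ) := by
          have h7' : ε/2 * (2/ε) ≤ ε/2 * x ^ (1/2:ℝ) :=
            mul_le_mul_of_nonneg_left h4' (by positivity)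
          have h8' : ε/2 * (2/ε) = 1 := by field_simp
          linarith
        have h9' : 1 * x ^ (1/2:ℝ) ≤ (ε/2 * x ^ (1/2:ℝ)) * x ^ (1/2:ℝ) :=
          mul_le_mul_of_nonneg_right h6' hrpos.le
        have h10' : (ε/2 * x ^ (1/2:ℝ)) * x ^ (1/2:ℝ) = ε/2 * x := by
          rw [mul_assoc, h3']
        rw [h10'] at h9'
        linarith
      calc Real.log x ^ 2 ≤ x ^ (1/2:ℝ) := le_trans h1 h2
      _ ≤ ε/2 * x := h5'
    have hy0sum : y0 ≤ M x + x / Real.log x ^ 3 := by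
      rw [hy0, max_le_iff]
      constructor
      · linarith
      · linarith
    have hsmall : (y0+1) * Real.log x ^ 2 / x ≤ 2*ε := by
      have key : (y0 + 1) * Real.log x^2/x
          ≤ (M x + x/Real.log x^3 + 1) * Real.log x^2/x := by
        gcongr
      have split : (M x + x/Real.log x^3 + 1) * Real.log x^2/x
          = M x * Real.log x^2/x + (x/Real.log x^3) * Real.log x^2/x + Real.log x^2/x := by
        ring
      rw [split] at key
      rw [hxl] at key
      linarith [hMxl, hinvl, hl2x]
    have hsmall1 : (y0+1) * Real.log x ^ 2 / (2*x) ≤ ε := by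
      have h1 : (y0+1) * Real.log x ^ 2 / (2*x) = ((y0+1) * Real.log x^2/x)/2 := by
        ring
      rw [h1]
      linarith
    have hsmall2 : (y0+1) * Real.log x / x ≤ ε := by
      have hy01 : (0:ℝ) ≤ y0 + 1 := by linarith
      have h1 : (y0+1) * Real.log x ≤ (y0+1) * (Real.log x^2/2) := by
        apply mul_le_mul_of_nonneg_left _ hy01
        nlinarith
      rw [div_le_iff₀ hx0]
      have h2' := hsmall1
      rw [div_le_iff₀ (by positivity : (0:ℝ) < 2*x)] at h2'
      linarith
    -- prime counting bounds
    have hπ_up : (primePi x : ℝ) ≤ (1+ε) * (x / Real.log x) := by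
      have h1 : (primePi x:ℝ) * Real.log x / x ≤ 1 + ε := by
        have := (abs_lt.1 hpnt_x).2
        linarith
      rw [div_le_iff₀ hx0] at h1
      rw [show (1+ε)*(x/Real.log x) = (1+ε)*x/Real.log x by ring, le_div_iff₀ hl0]
      linarith
    have hπ_lo : (1-ε) * (x / Real.log x) ≤ (primePi x : ℝ) := by
      have h1 : 1 - ε ≤ (primePi x:ℝ) * Real.log x / x := by
        have := (abs_lt.1 hpnt_x).1
        linarith
      rw [le_div_iff₀ hx0] at h1
      rw [show (1-ε)*(x/Real.log x) = (1-ε)*x/Real.log x by ring, div_le_iff₀ hl0]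
      linarith
    -- combinatorics
    set K : ℕ := ⌊M x / 2⌋₊ with hK
    set N : ℕ := 2 * K with hNdef
    have hKM : (K:ℝ) ≤ M x / 2 := by
      have h0 := Nat.floor_le (by positivity : (0:ℝ) ≤ M x / 2)
      rw [← hK] at h0
      exact h0
    have hNM : (N:ℝ) ≤ M x := by
      rw [hNdef]
      push_cast
      linarith
    have hMN : M x ≤ (N:ℝ) + 2 := by
      have h0 := Nat.lt_floor_add_one (M x / 2)
      rw [← hK] at h0
      rw [hNdef]
      push_cast
      linarith
    set P : Finset ℕ := (Finset.range (⌊x⌋₊ + 1)).filter Nat.Prime with hP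
    set c : ℕ → ℕ := fun p => ((Finset.Icc 1 K).filter fun k => (p + 2 * k).Prime).card with hcdef
    have hSr : ∑ k ∈ Finset.Icc 1 K, (piPair (2 * k) x : ℝ) = ∑ p ∈ P, (c p : ℝ) := by
      have h0 := sum_piPair_swap x K
      have h1 := congrArg (fun n : ℕ => (n:ℝ)) h0
      push_cast at h1
      exact h1
    set Q : Finset ℕ := P.filter (fun p => y0 < (p:ℝ)) with hQ
    set Rst : Finset ℕ := P.filter (fun p => ¬ y0 < (p:ℝ)) with hRst
    have hQR : ∑ p ∈ P, (c p:ℝ) = ∑ p ∈ Q, (c p:ℝ) + ∑ p ∈ Rst, (c p:ℝ) :=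
      (Finset.sum_filter_add_sum_filter_not P _ _).symm
    have hRsteq : Rst = (Finset.range (⌊y0⌋₊ + 1)).filter Nat.Prime := by
      rw [hRst, hP]
      rw [Finset.filter_filter]
      ext a
      simp only [Finset.mem_filter, Finset.mem_range, not_lt]
      constructor
      · rintro ⟨h1, h2, h3⟩
        have ha : a ≤ ⌊y0⌋₊ := Nat.le_floor h3
        exact ⟨by omega, h2⟩
      · rintro ⟨h1, h2⟩
        have ha : a ≤ ⌊y0⌋₊ := by omega
        have h3 : (a:ℝ) ≤ y0 := (Nat.le_floor_iff hy0pos.le).1 ha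
        have hfl : ⌊y0⌋₊ ≤ ⌊x⌋₊ := Nat.floor_le_floor hy0lex
        exact ⟨by omega, h2, h3⟩
    have hRcard : (Rst.card : ℝ) = (primePi y0 : ℝ) := by
      rw [hRsteq]
      rfl
    have hRst_le : ∑ p ∈ Rst, (c p:ℝ) ≤ (y0+1) * (M x / 2) := by
      have h1 : ∀ p ∈ Rst, (c p:ℝ) ≤ (K:ℝ) := by
        intro p _
        have h2' : c p ≤ K := by
          rw [hcdef]
          calc ((Finset.Icc 1 K).filter fun k => (p + 2 * k).Prime).card
              ≤ (Finset.Icc 1 K).card := Finset.card_filter_le _ _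
          _ = K := by rw [Nat.card_Icc]; omega
        exact_mod_cast h2'
      calc ∑ p ∈ Rst, (c p:ℝ) ≤ Rst.card • (K:ℝ) := Finset.sum_le_card_nsmul _ _ _ h1
      _ = (Rst.card:ℝ) * K := nsmul_eq_mul _ _
      _ ≤ (y0+1) * (M x / 2) := by
          have hπy0 : (primePi y0 : ℝ) ≤ y0 + 1 := primePi_le y0 hy0pos.le
          rw [hRcard]
          apply mul_le_mul hπy0 hKM (Nat.cast_nonneg _) (by linarith)
    -- per-prime bounds on Q
    have hper : ∀ p ∈ Q, (c p : ℝ) ≤ (1+ε) * (M x / Real.log y0) ∧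
        (1-2*ε) * (M x / Real.log x) ≤ (c p:ℝ) := by
      intro p hpQ
      rw [hQ, Finset.mem_filter] at hpQ
      obtain ⟨hpP, hpy0⟩ := hpQ
      rw [hP, Finset.mem_filter, Finset.mem_range] at hpP
      obtain ⟨hplt, hp⟩ := hpP
      have hpx : (p:ℝ) ≤ x := by
        have h1 : p ≤ ⌊x⌋₊ := by omega
        calc (p:ℝ) ≤ (⌊x⌋₊:ℝ) := by exact_mod_cast h1
        _ ≤ x := Nat.floor_le hx0.le
      have hp3 : (3:ℝ) ≤ (p:ℝ) := by linarith [hpy0, hy0m, hm12]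
      have hp2 : p ≠ 2 := by
        intro hcon
        rw [hcon] at hp3
        norm_num at hp3
      have hLp1 : 1 ≤ Real.log (p:ℝ) := log_ge_one hp3
      have hLppos : 0 < Real.log (p:ℝ) := by linarith
      have hLpl : Real.log (p:ℝ) ≤ Real.log x := Real.log_le_log (by linarith) hpx
      have hLpy0 : Real.log y0 ≤ Real.log (p:ℝ) := Real.log_le_log hy0pos (le_of_lt hpy0)
      have hcp1 : c p = ((Finset.Ioc p (p + N)).filter Nat.Prime).card := by
        rw [hcdef]
        have h1 := count_eq_interval p K hp hp2
        rw [← hNdef] at h1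
        exact h1
      have hcpN : c p + primePi ((p:ℕ):ℝ) = primePi ((p + N:ℕ):ℝ) := by
        rw [hcp1]
        exact primePi_Ioc p N
      have hcp : (c p:ℝ) = (primePi ((p:ℝ) + (N:ℝ)):ℝ) - (primePi ((p:ℕ):ℝ):ℝ) := by
        have h1 := congrArg (fun n : ℕ => (n:ℝ)) hcpN
        push_cast at h1
        linarith
      have hYp : Y ≤ (p:ℝ) := by linarith [hy0Y, hpy0]
      have hMp : M (p:ℝ) ≤ M x := hmono hpx
      have hMxp : M x ≤ (p:ℝ) := by linarith [hy0m, hpy0]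
      have hUp := hY (p:ℝ) hYp (M x) hMp hMxp
      have hDup := (abs_le.1 hUp).2
      have hDlo := (abs_le.1 hUp).1
      have hmon1 : (primePi ((p:ℝ) + (N:ℝ)):ℝ) ≤ (primePi ((p:ℝ) + M x):ℝ) := by
        have h1 : (p:ℝ) + (N:ℝ) ≤ (p:ℝ) + M x := by linarith [hNM]
        exact_mod_cast primePi_mono h1
      constructor
      · have h1 : (c p:ℝ) ≤ (primePi ((p:ℝ)+M x):ℝ) - primePi (p:ℝ) := by
          rw [hcp]
          push_cast
          linarith [hmon1]
        have h2' : (primePi ((p:ℝ)+M x):ℝ) - primePi (p:ℝ)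
            ≤ (1+ε) * (M x / Real.log (p:ℝ)) := by
          linarith [hDup]
        have h3' : (1+ε) * (M x / Real.log (p:ℝ)) ≤ (1+ε) * (M x / Real.log y0) := by
          gcongr
        linarith
      · have h1 : (primePi ((p:ℝ)+M x):ℝ) ≤ (primePi ((p:ℝ)+(N:ℝ)):ℝ) + (M x - (N:ℝ)) + 1 := by
          have h2' := primePi_sub_le (a := (p:ℝ)+(N:ℝ)) (b := (p:ℝ) + M x)
            (by positivity) (by linarith [hNM])
          linarith
        have h2' : (1-ε) * (M x / Real.log (p:ℝ))
            ≤ (primePi ((p:ℝ)+M x):ℝ) - primePi (p:ℝ) := by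
          linarith [hDlo]
        have h3' : (1-ε) * (M x / Real.log x) ≤ (1-ε) * (M x / Real.log (p:ℝ)) := by
          gcongr
          linarith
        have h4' : (1-ε) * (M x / Real.log (p:ℝ)) - 3 ≤ (c p:ℝ) := by
          rw [hcp]
          push_cast
          linarith [hMN, h1, h2']
        have h5' : ε * (M x / Real.log x) ≤ ε * (M x / Real.log (p:ℝ)) := by
          gcongr
        linarith [hεml, h3', h4', h5']
    have hQup : ∑ p ∈ Q, (c p:ℝ) ≤ (Q.card:ℝ) * ((1+ε) * (M x / Real.log y0)) := by
      calc ∑ p ∈ Q, (c p:ℝ) ≤ Q.card • ((1+ε) * (M x / Real.log y0)) :=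
        Finset.sum_le_card_nsmul _ _ _ (fun p hp => (hper p hp).1)
      _ = _ := nsmul_eq_mul _ _
    have hQlo : (Q.card:ℝ) * ((1-2*ε) * (M x / Real.log x)) ≤ ∑ p ∈ Q, (c p:ℝ) := by
      calc (Q.card:ℝ) * ((1-2*ε) * (M x / Real.log x))
          = Q.card • ((1-2*ε) * (M x / Real.log x)) := (nsmul_eq_mul _ _).symm
      _ ≤ ∑ p ∈ Q, (c p:ℝ) := Finset.card_nsmul_le_sum _ _ _ (fun p hp => (hper p hp).2)
    have hQRcard : Q.card + Rst.card = P.card :=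
      Finset.card_filter_add_card_filter_not _
    have hPcard : (P.card : ℝ) = (primePi x : ℝ) := by rw [hP]; rfl
    have hA_up : (Q.card:ℝ) ≤ (1+ε)*(x/Real.log x) := by
      have h1 : (Q.card:ℝ) ≤ (P.card:ℝ) := by exact_mod_cast Nat.le.intro hQRcard
      rw [hPcard] at h1
      linarith [hπ_up]
    have hA_lo : (1-ε)*(x/Real.log x) - (y0+1) ≤ (Q.card:ℝ) := by
      have h1 : (Q.card:ℝ) + (Rst.card:ℝ) = (P.card:ℝ) := by exact_mod_cast hQRcard
      have h2' : (Rst.card:ℝ) ≤ y0 + 1 := by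
        rw [hRcard]
        exact primePi_le y0 hy0pos.le
      rw [hPcard] at h1
      linarith [hπ_lo]
    -- final algebra
    set S : ℝ := ∑ k ∈ Finset.Icc 1 K, (piPair (2 * k) x : ℝ) with hSdef
    have hS1 : S = ∑ p ∈ Q, (c p:ℝ) + ∑ p ∈ Rst, (c p:ℝ) := by rw [hSr]; exact hQR
    have hSup : S ≤ (Q.card:ℝ)*((1+ε)*(M x/Real.log y0)) + (y0+1)*(M x/2) := by
      rw [hS1]
      exact add_le_add hQup hRst_le
    have hSlo : (Q.card:ℝ)*((1-2*ε)*(M x/Real.log x)) ≤ S := by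
      rw [hS1]
      have h0 : 0 ≤ ∑ p ∈ Rst, (c p:ℝ) := Finset.sum_nonneg (fun p _ => Nat.cast_nonneg _)
      linarith [hQlo]
    have hS0 : 0 ≤ S := by
      rw [hSdef]
      exact Finset.sum_nonneg (fun p _ => Nat.cast_nonneg _)
    have hR : ((2/M x) * S)/(2*x/Real.log x^2) = S * Real.log x^2/(M x*x) := by
      field_simp
    have hup6 : S*Real.log x^2/(M x*x) ≤ (1+ε)*((1+ε)*(1+ε)) + ε := by
      have hup1 : S * Real.log x^2/(M x*x)
          ≤ ((Q.card:ℝ)*((1+ε)*(M x/Real.log y0)) + (y0+1)*(M x/2)) * Real.log x^2/(M x*x) := by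
        gcongr
      have hup2 : ((Q.card:ℝ)*((1+ε)*(M x/Real.log y0)) + (y0+1)*(M x/2)) * Real.log x^2/(M x*x)
          = (1+ε)*((Q.card:ℝ)*Real.log x^2/(Real.log y0*x)) + (y0+1)*Real.log x^2/(2*x) := by
        field_simp
      have hup3 : (Q.card:ℝ)*Real.log x^2/(Real.log y0*x)
          ≤ ((1+ε)*(x/Real.log x))*Real.log x^2/(Real.log y0*x) := by
        gcongr
      have hup4 : ((1+ε)*(x/Real.log x))*Real.log x^2/(Real.log y0*x)
          = (1+ε)*(Real.log x/Real.log y0) := by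
        field_simp
      have hup5 : Real.log x/Real.log y0 ≤ 1+ε := by
        rw [div_le_iff₀ hL1pos]
        linarith [hll]
      have h1 : (Q.card:ℝ)*Real.log x^2/(Real.log y0*x) ≤ (1+ε)*(1+ε) := by
        rw [hup4] at hup3
        calc (Q.card:ℝ)*Real.log x^2/(Real.log y0*x) ≤ (1+ε)*(Real.log x/Real.log y0) := hup3
        _ ≤ (1+ε)*(1+ε) := mul_le_mul_of_nonneg_left hup5 (by linarith)
      calc S*Real.log x^2/(M x*x)
          ≤ (1+ε)*((Q.card:ℝ)*Real.log x^2/(Real.log y0*x)) + (y0+1)*Real.log x^2/(2*x) := by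
            rw [← hup2]
            exact hup1
      _ ≤ (1+ε)*((1+ε)*(1+ε)) + ε := by
          have h2' : (1+ε)*((Q.card:ℝ)*Real.log x^2/(Real.log y0*x)) ≤ (1+ε)*((1+ε)*(1+ε)) :=
            mul_le_mul_of_nonneg_left h1 (by linarith)
          linarith [hsmall1]
    have hlo6 : (1-2*ε)*(1-2*ε) ≤ S*Real.log x^2/(M x*x) := by
      have hlo1 : ((Q.card:ℝ)*((1-2*ε)*(M x/Real.log x))) * Real.log x^2/(M x*x)
          ≤ S*Real.log x^2/(M x*x) := by
        gcongr
      have hlo2 : ((Q.card:ℝ)*((1-2*ε)*(M x/Real.log x))) * Real.log x^2/(M x*x)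
          = (1-2*ε)*((Q.card:ℝ)*Real.log x/x) := by
        field_simp
      have hlo5 : 1-2*ε ≤ (Q.card:ℝ)*Real.log x/x := by
        have hlo3 : ((1-ε)*(x/Real.log x) - (y0+1))*Real.log x/x ≤ (Q.card:ℝ)*Real.log x/x := by
          gcongr ?_ * Real.log x / x
        have hlo4 : ((1-ε)*(x/Real.log x) - (y0+1))*Real.log x/x
            = (1-ε) - (y0+1)*Real.log x/x := by
          field_simp
        rw [hlo4] at hlo3
        have h2' : (y0+1)*Real.log x/x ≤ ε := by
          have := hsmall2
          calc (y0+1)*Real.log x/x = (y0+1)*Real.log x/x := rfl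
          _ ≤ ε := by
              rw [div_le_iff₀ hx0]
              rw [div_le_iff₀ hx0] at this
              linarith
        linarith
      calc (1-2*ε)*(1-2*ε) ≤ (1-2*ε)*((Q.card:ℝ)*Real.log x/x) :=
        mul_le_mul_of_nonneg_left hlo5 (by linarith)
      _ = ((Q.card:ℝ)*((1-2*ε)*(M x/Real.log x))) * Real.log x^2/(M x*x) := hlo2.symm
      _ ≤ S*Real.log x^2/(M x*x) := hlo1
    rw [hR, abs_le]
    constructor
    · exact ineq_lo ε _ hε hε4 hlo6
    · exact ineq_up ε _ hε hε4 hup6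
  rw [Metric.tendsto_nhds]
  intro δ hδ
  have hεp : 0 < min (δ/9) (1/4) := lt_min (by positivity) (by norm_num)
  filter_upwards [aux2 _ hεp (min_le_right _ _)] with x hx
  rw [Real.dist_eq]
  have h1 : 8 * min (δ/9) (1/4) ≤ 8*(δ/9) := by
    have := min_le_left (δ/9) (1/4)
    linarith
  calc |((2 / M x) * ∑ k ∈ Finset.Icc 1 ⌊M x / 2⌋₊, (piPair (2 * k) x : ℝ)) /
          (2 * x / (Real.log x) ^ 2) - 1| ≤ 8 * min (δ/9) (1/4) := hx
  _ ≤ 8*(δ/9) := h1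
  _ < δ := by linarith

/-- **Main Theorem 1, first part.** If `M` is positive, increasing, `M(x) → ∞`,
`M(x) = o(x / log² x)`, and for every function `h` with `M(x) ≤ h(x) ≤ x` one has
`π(x + h(x)) − π(x) ∼ h(x)/log x`, then
`(2/M(x)) ∑_{2k ≤ M(x)} π_{2k}(x) ∼ 2x/log² x`. -/
theorem averaged_hardy_littlewood
    (M : ℝ → ℝ) (hpos : ∀ x, 0 < M x) (hmono : Monotone M)
    (htop : Tendsto M atTop atTop)
    (hMo : M =o[atTop] fun x => x / (Real.log x) ^ 2)
    (hhyp : ∀ h : ℝ → ℝ, (∀ᶠ x in atTop, M x ≤ h x ∧ h x ≤ x) →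
      Tendsto (fun x => ((primePi (x + h x) : ℝ) - (primePi x : ℝ)) / (h x / Real.log x))
        atTop (nhds 1)) :
    Tendsto (fun x =>
        ((2 / M x) * ∑ k ∈ Finset.Icc 1 ⌊M x / 2⌋₊, (piPair (2 * k) x : ℝ)) /
          (2 * x / (Real.log x) ^ 2))
      atTop (nhds 1) := by
  have hMle : ∀ᶠ x in atTop, M x ≤ x := by
    filter_upwards [hMo.bound (by norm_num : (0:ℝ) < 1/2), eventually_ge_atTop 3]
      with x hx hx3
    have hL1 : 1 ≤ Real.log x := log_ge_one hx3
    have hx0 : (0:ℝ) < x := by linarith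
    have h2 : |x / Real.log x^2| = x / Real.log x^2 := abs_of_pos (by positivity)
    have h3 : x / Real.log x ^ 2 ≤ x := by
      rw [div_le_iff₀ (by positivity)]
      have h1sq : (1:ℝ) ≤ Real.log x ^ 2 := by nlinarith
      have h2a : x * 1 ≤ x * Real.log x ^ 2 := mul_le_mul_of_nonneg_left h1sq hx0.le
      linarith
    rw [Real.norm_eq_abs, Real.norm_eq_abs, h2] at hx
    calc M x ≤ |M x| := le_abs_self _
    _ ≤ 1/2 * (x / Real.log x^2) := hx
    _ ≤ x := by linarith
  have U := uniform_short_interval M hpos hMle hhyp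
  have hMlog := M_div_log_atTop M hpos hMo hhyp
  have hpnt := pnt_from_uniform M hMle U
  exact averaged_hardy_littlewood_aux M hpos hmono htop hMo hhyp U hpnt hMlog hMle
end

section
/- With C_{2k} := 2 ∏_{p > 2} p(p−2)/(p−1)² · ∏_{2 < p | k} (p−1)/(p−2) (the first product over all odd primes, the second over odd primes dividing k), one has (1/E²) · ∑_{1 ≤ k ≤ E} (E − k) C_{2k} → 1 as E → ∞. -/
open Filter Finset
open scoped Topology

/-- The Hardy–Littlewood singular series constant
`C_{2k} = 2 ∏_{p > 2} p(p−2)/(p−1)² ∏_{2 < p ∣ k} (p−1)/(p−2)`,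
where the first product is over all odd primes and the second over odd primes
dividing `k`. -/
noncomputable def hlConst (k : ℕ) : ℝ :=
  2 * (∏' p : {p : ℕ // p.Prime ∧ 2 < p},
        ((p.1 : ℝ) * ((p.1 : ℝ) - 2)) / ((p.1 : ℝ) - 1) ^ 2) *
    ∏ p ∈ k.primeFactors.filter (fun p => 2 < p), ((p : ℝ) - 1) / ((p : ℝ) - 2)

namespace WSSA

/-- the predicate "odd and squarefree" -/
def Qd (d : ℕ) : Prop := Squarefree d ∧ ¬ 2 ∣ d

instance : DecidablePred Qd := fun _ => inferInstanceAs (Decidable (_ ∧ _))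

noncomputable def gw (d : ℕ) : ℝ := ∏ p ∈ d.primeFactors, 1 / ((p : ℝ) - 2)

noncomputable def Fw (w : ℕ → ℝ) (d : ℕ) : ℝ :=
  if Qd d then ∏ p ∈ d.primeFactors, w p else 0

noncomputable def wH (p : ℕ) : ℝ := 1 / ((p : ℝ) * ((p : ℝ) - 2))
noncomputable def wU (p : ℕ) : ℝ := -(1 / ((p : ℝ) - 1) ^ 2)

lemma mem_pf {d p : ℕ} (hd : Qd d) (hp : p ∈ d.primeFactors) :
    p.Prime ∧ 2 < p ∧ p ∣ d := by
  obtain ⟨hp1, hp2, -⟩ := Nat.mem_primeFactors.mp hp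
  refine ⟨hp1, lt_of_le_of_ne hp1.two_le ?_, hp2⟩
  rintro rfl
  exact hd.2 hp2

lemma Fw_one (w : ℕ → ℝ) : Fw w 1 = 1 := by
  simp [Fw, Qd, squarefree_one]

lemma Fw_zero (w : ℕ → ℝ) : Fw w 0 = 0 := by
  simp [Fw, Qd, not_squarefree_zero]

lemma Fw_mul (w : ℕ → ℝ) {m n : ℕ} (h : Nat.Coprime m n) :
    Fw w (m * n) = Fw w m * Fw w n := by
  by_cases H : Qd (m * n)
  · have hm0 : m ≠ 0 := fun h0 => by simp [h0] at H; exact not_squarefree_zero H.1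
    have hn0 : n ≠ 0 := fun h0 => by simp [h0] at H; exact not_squarefree_zero H.1
    have hsf := (Nat.squarefree_mul h).mp H.1
    have hQm : Qd m := ⟨hsf.1, fun hd => H.2 (hd.mul_right n)⟩
    have hQn : Qd n := ⟨hsf.2, fun hd => H.2 (hd.mul_left m)⟩
    rw [Fw, if_pos H, Fw, if_pos hQm, Fw, if_pos hQn,
      Nat.primeFactors_mul hm0 hn0, Finset.prod_union
        ((Nat.disjoint_primeFactors hm0 hn0).mpr h)]
  · rw [Fw, if_neg H]
    have : ¬ (Qd m ∧ Qd n) := by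
      rintro ⟨hm, hn⟩
      refine H ⟨(Nat.squarefree_mul h).mpr ⟨hm.1, hn.1⟩, fun hd => ?_⟩
      rcases (Nat.Prime.dvd_mul Nat.prime_two).mp hd with h2 | h2
      · exact hm.2 h2
      · exact hn.2 h2
    rcases not_and_or.mp this with hm | hn
    · rw [show Fw w m = 0 from if_neg hm, zero_mul]
    · rw [show Fw w n = 0 from if_neg hn, mul_zero]

lemma Fw_prime (w : ℕ → ℝ) {p : ℕ} (hp : p.Prime) :
    Fw w p = if 2 < p then w p else 0 := by
  rcases lt_or_ge 2 p with h | h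
  · have : Qd p := ⟨hp.squarefree, fun hd =>
      absurd ((Nat.prime_dvd_prime_iff_eq Nat.prime_two hp).mp hd) (by omega)⟩
    rw [Fw, if_pos this, if_pos h, hp.primeFactors, Finset.prod_singleton]
  · have hp2 : p = 2 := le_antisymm h hp.two_le
    subst hp2
    rw [Fw, if_neg (fun H => H.2 dvd_rfl), if_neg (by omega)]

lemma Fw_prime_pow (w : ℕ → ℝ) {p e : ℕ} (hp : p.Prime) (he : 2 ≤ e) :
    Fw w (p ^ e) = 0 := by
  rw [Fw, if_neg]
  rintro ⟨hsf, -⟩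
  exact hp.not_isUnit (hsf p (by
    have : p ^ 2 ∣ p ^ e := pow_dvd_pow p he
    rwa [sq] at this))

lemma Fw_tsum_pow (w : ℕ → ℝ) {p : ℕ} (hp : p.Prime) :
    ∑' e : ℕ, Fw w (p ^ e) = 1 + Fw w p := by
  rw [tsum_eq_sum (s := {0, 1}) (by
    intro e he
    simp only [Finset.mem_insert, Finset.mem_singleton] at he
    exact Fw_prime_pow w hp (by omega))]
  simp [Fw_one]

noncomputable def cc (p : ℕ) : ℝ := if p = 3 then 2 else 1

lemma cc_pos (p : ℕ) : 0 < cc p := by unfold cc; split <;> norm_num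

lemma rpow_neg32 {x : ℝ} (hx : 0 < x) : x ^ (-(3/2) : ℝ) = (Real.sqrt (x ^ 3))⁻¹ := by
  rw [Real.sqrt_eq_rpow, ← Real.rpow_natCast x 3, ← Real.rpow_mul hx.le, ← Real.rpow_neg hx.le]
  norm_num

lemma prime_five {p : ℕ} (hp : p.Prime) (h2 : 2 < p) (h3 : p ≠ 3) : 5 ≤ p := by
  have h4 : p ≠ 4 := by rintro rfl; norm_num at hp
  omega

lemma wH_bound {p : ℕ} (hp : p.Prime) (h2 : 2 < p) :
    |wH p| ≤ cc p * (p : ℝ) ^ (-(3/2) : ℝ) := by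
  have hx : (3 : ℝ) ≤ (p : ℝ) := by exact_mod_cast h2
  have hx0 : (0 : ℝ) < p := by linarith
  unfold wH
  have hden : (0:ℝ) < (p:ℝ) * ((p : ℝ) - 2) := by nlinarith
  rw [rpow_neg32 hx0, abs_of_nonneg (le_of_lt (by positivity)), ← one_div, mul_one_div,
    div_le_div_iff₀ hden (Real.sqrt_pos.mpr (by positivity))]
  rw [one_mul]
  have : Real.sqrt ((p:ℝ) ^ 3) ≤ cc p * ((p:ℝ) * ((p : ℝ) - 2)) := by
    rw [Real.sqrt_le_iff]
    constructor
    · exact le_of_lt (mul_pos (cc_pos p) hden)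
    · rcases eq_or_ne p 3 with h3 | h3
      · subst h3; unfold cc; norm_num
      · have h5 : (5 : ℝ) ≤ p := by exact_mod_cast prime_five hp h2 h3
        unfold cc; rw [if_neg h3]; nlinarith
  linarith

lemma wU_bound {p : ℕ} (hp : p.Prime) (h2 : 2 < p) :
    |wU p| ≤ cc p * (p : ℝ) ^ (-(3/2) : ℝ) := by
  have hx : (3 : ℝ) ≤ (p : ℝ) := by exact_mod_cast h2
  have hx0 : (0 : ℝ) < p := by linarith
  unfold wU
  have hden : (0:ℝ) < ((p : ℝ) - 1) ^ 2 := by nlinarith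
  rw [rpow_neg32 hx0, abs_neg, abs_of_nonneg (le_of_lt (by positivity)), ← one_div, mul_one_div,
    div_le_div_iff₀ hden (Real.sqrt_pos.mpr (by positivity))]
  rw [one_mul]
  have : Real.sqrt ((p:ℝ) ^ 3) ≤ cc p * ((p:ℝ) - 1) ^ 2 := by
    rw [Real.sqrt_le_iff]
    constructor
    · exact le_of_lt (mul_pos (cc_pos p) hden)
    · rcases eq_or_ne p 3 with h3 | h3
      · subst h3; unfold cc; norm_num
      · have h5 : (5 : ℝ) ≤ p := by exact_mod_cast prime_five hp h2 h3
        unfold cc; rw [if_neg h3]; nlinarith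
  linarith

lemma Fw_bound (w : ℕ → ℝ)
    (hwb : ∀ p : ℕ, p.Prime → 2 < p → |w p| ≤ cc p * (p : ℝ) ^ (-(3/2) : ℝ))
    (d : ℕ) : |Fw w d| ≤ 2 * (d : ℝ) ^ (-(3/2) : ℝ) := by
  by_cases H : Qd d
  · rw [Fw, if_pos H, Finset.abs_prod]
    have step1 : ∏ p ∈ d.primeFactors, |w p| ≤
        ∏ p ∈ d.primeFactors, (cc p * (p : ℝ) ^ (-(3/2) : ℝ)) := by
      refine Finset.prod_le_prod (fun p _ => abs_nonneg _) (fun p hp => ?_)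
      obtain ⟨h1, h2, -⟩ := mem_pf H hp
      exact hwb p h1 h2
    have step2 : ∏ p ∈ d.primeFactors, (cc p * (p : ℝ) ^ (-(3/2) : ℝ)) =
        (∏ p ∈ d.primeFactors, cc p) * ∏ p ∈ d.primeFactors, (p : ℝ) ^ (-(3/2) : ℝ) :=
      Finset.prod_mul_distrib
    have step3 : ∏ p ∈ d.primeFactors, (p : ℝ) ^ (-(3/2) : ℝ) = (d : ℝ) ^ (-(3/2) : ℝ) := by
      rw [Real.finset_prod_rpow _ _ (fun p _ => Nat.cast_nonneg p) _]
      congr 1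
      rw [← Nat.cast_prod]
      exact_mod_cast congrArg (Nat.cast (R := ℝ)) (Nat.prod_primeFactors_of_squarefree H.1)
    have step4 : ∏ p ∈ d.primeFactors, cc p ≤ 2 := by
      unfold cc
      rw [Finset.prod_ite_eq' d.primeFactors 3 (fun _ => (2:ℝ))]
      split <;> norm_num
    have hrn : (0:ℝ) ≤ (d : ℝ) ^ (-(3/2) : ℝ) := Real.rpow_nonneg (Nat.cast_nonneg d) _
    calc ∏ p ∈ d.primeFactors, |w p| ≤ _ := step1
      _ = _ := step2
      _ ≤ 2 * (d : ℝ) ^ (-(3/2) : ℝ) := by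
          rw [step3]; exact mul_le_mul_of_nonneg_right step4 hrn
  · rw [Fw, if_neg H, abs_zero]
    have : (0:ℝ) ≤ (d : ℝ) ^ (-(3/2) : ℝ) := Real.rpow_nonneg (Nat.cast_nonneg d) _
    linarith

lemma Fw_summable (w : ℕ → ℝ)
    (hwb : ∀ p : ℕ, p.Prime → 2 < p → |w p| ≤ cc p * (p : ℝ) ^ (-(3/2) : ℝ)) :
    Summable (fun n => ‖Fw w n‖) := by
  refine Summable.of_nonneg_of_le (fun n => norm_nonneg _)
    (fun n => ?_) (((Real.summable_nat_rpow (p := -(3/2))).mpr (by norm_num)).mul_left 2)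
  rw [Real.norm_eq_abs]
  exact Fw_bound w hwb n

/-! ### Euler products over odd primes -/

def ι : {p : ℕ // p.Prime ∧ 2 < p} → Nat.Primes := fun p => ⟨p.1, p.2.1⟩

lemma ι_inj : Function.Injective ι := by
  intro a b h
  exact Subtype.ext (congrArg (Subtype.val : Nat.Primes → ℕ) h)

lemma hasProd_odd (w : ℕ → ℝ)
    (hwb : ∀ p : ℕ, p.Prime → 2 < p → |w p| ≤ cc p * (p : ℝ) ^ (-(3/2) : ℝ)) :
    HasProd (fun p : {p : ℕ // p.Prime ∧ 2 < p} => 1 + w p.1) (∑' n, Fw w n) := by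
  have hP := EulerProduct.eulerProduct_hasProd (f := Fw w) (Fw_one w) (Fw_mul w)
    (Fw_summable w hwb) (Fw_zero w)
  have key : ∀ x : Nat.Primes, x ∉ Set.range ι → (∑' e : ℕ, Fw w ((x : ℕ) ^ e)) = 1 := by
    intro x hx
    have hx2 : (x : ℕ) = 2 := by
      by_contra h
      exact hx ⟨⟨x.1, x.2, lt_of_le_of_ne x.2.two_le (Ne.symm h)⟩, rfl⟩
    rw [Fw_tsum_pow w x.2, hx2, Fw_prime w Nat.prime_two]
    norm_num
  have h2 := (ι_inj.hasProd_iff key).mpr hP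
  refine h2.congr_fun ?_
  intro p
  show 1 + w p.1 = ∑' e : ℕ, Fw w ((ι p : ℕ) ^ e)
  rw [show ((ι p : ℕ)) = p.1 from rfl, Fw_tsum_pow w p.2.1, Fw_prime w p.2.1, if_pos p.2.2]

lemma hasProd_U :
    HasProd (fun p : {p : ℕ // p.Prime ∧ 2 < p} =>
      ((p.1 : ℝ) * ((p.1 : ℝ) - 2)) / ((p.1 : ℝ) - 1) ^ 2) (∑' n, Fw wU n) := by
  refine (hasProd_odd wU (fun p hp h2 => wU_bound hp h2)).congr_fun ?_
  intro p
  have hx : (3 : ℝ) ≤ (p.1 : ℝ) := by exact_mod_cast p.2.2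
  have h1 : ((p.1 : ℝ) - 1) ≠ 0 := by linarith
  unfold wU
  field_simp
  ring

lemma hasProd_H :
    HasProd (fun p : {p : ℕ // p.Prime ∧ 2 < p} =>
      ((p.1 : ℝ) - 1) ^ 2 / ((p.1 : ℝ) * ((p.1 : ℝ) - 2))) (∑' n, Fw wH n) := by
  refine (hasProd_odd wH (fun p hp h2 => wH_bound hp h2)).congr_fun ?_
  intro p
  have hx : (3 : ℝ) ≤ (p.1 : ℝ) := by exact_mod_cast p.2.2
  have h1 : (p.1 : ℝ) ≠ 0 := by linarith
  have h2 : ((p.1 : ℝ) - 2) ≠ 0 := by linarith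
  unfold wH
  field_simp
  ring

lemma AB_one : (∑' n, Fw wU n) * (∑' n, Fw wH n) = 1 := by
  have h := hasProd_U.mul hasProd_H
  have h1 : HasProd (fun p : {p : ℕ // p.Prime ∧ 2 < p} =>
      (((p.1 : ℝ) * ((p.1 : ℝ) - 2)) / ((p.1 : ℝ) - 1) ^ 2) *
      (((p.1 : ℝ) - 1) ^ 2 / ((p.1 : ℝ) * ((p.1 : ℝ) - 2)))) 1 := by
    refine hasProd_one.congr_fun (fun p => ?_)

    have hx : (3 : ℝ) ≤ (p.1 : ℝ) := by exact_mod_cast p.2.2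
    have h1 : ((p.1 : ℝ) - 1) ≠ 0 := by linarith
    have h2 : (p.1 : ℝ) ≠ 0 := by linarith
    have h3 : ((p.1 : ℝ) - 2) ≠ 0 := by linarith
    field_simp
  exact h.unique h1

/-! ### Divisor expansion -/

lemma squarefree_prod_primes {T : Finset ℕ} (hT : ∀ p ∈ T, p.Prime) :
    Squarefree (∏ p ∈ T, p) := by
  induction T using Finset.cons_induction with
  | empty => simpa using squarefree_one
  | cons a s ha ih =>
    rw [Finset.prod_cons]
    have hap : a.Prime := hT a (Finset.mem_cons_self a s)
    have hcop : Nat.Coprime a (∏ p ∈ s, p) := by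
      rw [Nat.coprime_prod_right_iff]
      intro q hq
      exact (Nat.coprime_primes hap (hT q (Finset.mem_cons_of_mem hq))).mpr
        (by rintro rfl; exact ha hq)
    exact (Nat.squarefree_mul hcop).mpr
      ⟨hap.squarefree, ih (fun p hp => hT p (Finset.mem_cons_of_mem hp))⟩

lemma expand {k : ℕ} (hk : k ≠ 0) :
    ∏ p ∈ k.primeFactors.filter (fun p => 2 < p), (((p : ℝ) - 1) / ((p : ℝ) - 2))
      = ∑ d ∈ k.divisors.filter Qd, gw d := by
  set P := k.primeFactors.filter (fun p => 2 < p) with hP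
  have hPmem : ∀ p ∈ P, p.Prime ∧ 2 < p ∧ p ∣ k := by
    intro p hp
    rw [hP, Finset.mem_filter, Nat.mem_primeFactors] at hp
    exact ⟨hp.1.1, hp.2, hp.1.2.1⟩
  have h1 : ∏ p ∈ P, (((p : ℝ) - 1) / ((p : ℝ) - 2))
      = ∏ p ∈ P, (1 / ((p : ℝ) - 2) + 1) := by
    refine Finset.prod_congr rfl (fun p hp => ?_)
    obtain ⟨-, h2, -⟩ := hPmem p hp
    have hx : (3 : ℝ) ≤ p := by exact_mod_cast h2
    have : ((p : ℝ) - 2) ≠ 0 := by linarith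
    field_simp
    ring
  rw [h1, Finset.prod_add]
  simp only [Finset.prod_const_one, mul_one]
  refine Finset.sum_nbij' (fun T => ∏ p ∈ T, p) (fun d => d.primeFactors) ?_ ?_ ?_ ?_ ?_
  · intro T hT
    rw [Finset.mem_powerset] at hT
    have hprime : ∀ p ∈ T, p.Prime := fun p hp => (hPmem p (hT hp)).1
    have hsf : Squarefree (∏ p ∈ T, p) := squarefree_prod_primes hprime
    have hdvd : (∏ p ∈ T, p) ∣ k := Finset.prod_primes_dvd k
      (fun p hp => (hprime p hp).prime) (fun p hp => (hPmem p (hT hp)).2.2)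
    rw [Finset.mem_filter, Nat.mem_divisors]
    refine ⟨⟨hdvd, hk⟩, hsf, fun h2 => ?_⟩
    have h2m : 2 ∈ (∏ p ∈ T, p).primeFactors :=
      Nat.mem_primeFactors.mpr ⟨Nat.prime_two, h2, hsf.ne_zero⟩
    rw [Nat.primeFactors_prod hprime] at h2m
    exact absurd (hPmem 2 (hT h2m)).2.1 (by omega)
  · intro d hd
    rw [Finset.mem_filter, Nat.mem_divisors] at hd
    rw [Finset.mem_powerset]
    intro p hp
    obtain ⟨hp1, hp2, hp3⟩ := mem_pf hd.2 hp
    rw [hP, Finset.mem_filter, Nat.mem_primeFactors]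
    exact ⟨⟨hp1, hp3.trans hd.1.1, hk⟩, hp2⟩
  · intro T hT
    rw [Finset.mem_powerset] at hT
    exact Nat.primeFactors_prod (fun p hp => (hPmem p (hT hp)).1)
  · intro d hd
    rw [Finset.mem_filter] at hd
    exact Nat.prod_primeFactors_of_squarefree hd.2.1
  · intro T hT
    rw [Finset.mem_powerset] at hT
    rw [gw, Nat.primeFactors_prod (fun p hp => (hPmem p (hT hp)).1)]

/-! ### The summands and their limits -/

noncomputable def Phi (E : ℝ) (d : ℕ) : ℝ :=
  if Qd d then
    gw d * (∑ m ∈ Finset.Icc 1 (⌊E⌋₊ / d), (E - ((d * m : ℕ) : ℝ))) / E ^ 2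
  else 0

lemma gw_nonneg {d : ℕ} (hd : Qd d) : 0 ≤ gw d := by
  refine Finset.prod_nonneg (fun p hp => ?_)
  obtain ⟨-, h2, -⟩ := mem_pf hd hp
  have hx : (3:ℝ) ≤ p := by exact_mod_cast h2
  have : (0:ℝ) < (p:ℝ) - 2 := by linarith
  positivity

lemma Fw_wH_eq {d : ℕ} (hd : Qd d) : Fw wH d = gw d / d := by
  rw [Fw, if_pos hd, gw]
  have hcast : ((d:ℝ)) = ∏ p ∈ d.primeFactors, (p:ℝ) := by
    rw [← Nat.cast_prod]
    exact_mod_cast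
      (congrArg (Nat.cast (R := ℝ)) (Nat.prod_primeFactors_of_squarefree hd.1)).symm
  rw [hcast, ← Finset.prod_div_distrib]
  refine Finset.prod_congr rfl (fun p hp => ?_)
  obtain ⟨-, h2, -⟩ := mem_pf hd hp
  have hx : (3:ℝ) ≤ p := by exact_mod_cast h2
  have hp0 : (p:ℝ) ≠ 0 := by linarith
  have hp2 : ((p:ℝ) - 2) ≠ 0 := by linarith
  unfold wH
  field_simp

lemma gauss (M : ℕ) : ∑ m ∈ Finset.Icc 1 M, (m : ℝ) = M * (M + 1) / 2 := by
  induction M with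
  | zero => simp
  | succ n ih =>
    rw [Finset.sum_Icc_succ_top (by omega), ih]
    push_cast
    ring

lemma V_eval (E : ℝ) (d M : ℕ) :
    ∑ m ∈ Finset.Icc 1 M, (E - ((d * m : ℕ) : ℝ))
      = M * E - d * ((M : ℝ) * (M + 1) / 2) := by
  have h1 : ∀ m : ℕ, (E - ((d*m:ℕ):ℝ)) = E - (d:ℝ) * (m:ℝ) := by
    intro m; push_cast; ring
  simp only [h1]
  rw [Finset.sum_sub_distrib, Finset.sum_const, ← Finset.mul_sum, gauss, Nat.card_Icc]
  simp only [Nat.add_sub_cancel, nsmul_eq_mul]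

lemma phi_tendsto (d : ℕ) : Tendsto (fun E => Phi E d) atTop (𝓝 (Fw wH d / 2)) := by
  by_cases H : Qd d
  · have hd0 : d ≠ 0 := H.1.ne_zero
    have hdr : (0:ℝ) < d := by exact_mod_cast Nat.pos_of_ne_zero hd0
    have hdne : (d:ℝ) ≠ 0 := ne_of_gt hdr
    have h0 : Tendsto (fun y : ℝ => (⌊y⌋₊ : ℝ) / y) atTop (𝓝 1) :=
      tendsto_nat_floor_div_atTop
    have h1 : Tendsto (fun E : ℝ => E / (d:ℝ)) atTop atTop :=
      tendsto_id.atTop_div_const hdr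
    have h2 : Tendsto (fun E : ℝ => (⌊E / (d:ℝ)⌋₊ : ℝ) / (E / (d:ℝ))) atTop (𝓝 1) :=
      h0.comp h1
    have hr : Tendsto (fun E : ℝ => (⌊E / (d:ℝ)⌋₊ : ℝ) / E) atTop (𝓝 (1 / d)) := by
      have h3 := h2.div_const (d:ℝ)
      rw [one_div] at h3 ⊢
      refine h3.congr' ?_
      filter_upwards [eventually_gt_atTop (0:ℝ)] with E hE
      have : E ≠ 0 := ne_of_gt hE
      field_simp
    have hiE : Tendsto (fun E : ℝ => 1 / E) atTop (𝓝 0) := by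
      simpa only [one_div] using tendsto_inv_atTop_zero
    have main : Tendsto (fun E : ℝ =>
        gw d * ((⌊E / (d:ℝ)⌋₊ : ℝ) / E
          - (d:ℝ)/2 * (((⌊E / (d:ℝ)⌋₊ : ℝ) / E) * ((⌊E / (d:ℝ)⌋₊ : ℝ) / E + 1/E))))
        atTop (𝓝 (gw d * (1/(d:ℝ) - (d:ℝ)/2 * (1/(d:ℝ) * (1/(d:ℝ) + 0))))) :=
      tendsto_const_nhds.mul (hr.sub ((hr.mul (hr.add hiE)).const_mul ((d:ℝ)/2)))
    have hval : gw d * (1/(d:ℝ) - (d:ℝ)/2 * (1/(d:ℝ) * (1/(d:ℝ) + 0))) = Fw wH d / 2 := by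
      rw [Fw_wH_eq H]
      field_simp
      ring
    rw [← hval]
    refine Tendsto.congr' ?_ main
    filter_upwards [eventually_ge_atTop (1:ℝ)] with E hE
    have hE0 : (0:ℝ) < E := by linarith
    have hEne : E ≠ 0 := ne_of_gt hE0
    have hfl : ⌊E / (d:ℝ)⌋₊ = ⌊E⌋₊ / d := Nat.floor_div_natCast E d
    rw [Phi, if_pos H, ← hfl, V_eval]
    field_simp
  · have hF : Fw wH d = 0 := if_neg H
    have : (fun E => Phi E d) = fun _ => (0:ℝ) := by
      funext E
      rw [Phi, if_neg H]
    rw [this, hF, zero_div]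
    exact tendsto_const_nhds

lemma phi_bound : ∀ᶠ E in atTop, ∀ d : ℕ, ‖Phi E d‖ ≤ 2 * (d:ℝ) ^ (-(3/2) : ℝ) := by
  filter_upwards [eventually_ge_atTop (1:ℝ)] with E hE d
  have hE0 : (0:ℝ) < E := by linarith
  by_cases H : Qd d
  · have hd0 : d ≠ 0 := H.1.ne_zero
    have hdr : (0:ℝ) < d := by exact_mod_cast Nat.pos_of_ne_zero hd0
    set M := ⌊E⌋₊ / d with hM
    have hfloor : (⌊E⌋₊ : ℝ) ≤ E := Nat.floor_le (by linarith)
    have hdM : ((d * M : ℕ) : ℝ) ≤ E := by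
      have h1 : d * M ≤ ⌊E⌋₊ := by rw [hM, mul_comm]; exact Nat.div_mul_le_self _ _
      calc ((d*M:ℕ):ℝ) ≤ (⌊E⌋₊:ℝ) := by exact_mod_cast h1
        _ ≤ E := hfloor
    have hterm : ∀ m ∈ Finset.Icc 1 M, 0 ≤ E - ((d*m:ℕ):ℝ) ∧ E - ((d*m:ℕ):ℝ) ≤ E := by
      intro m hm
      rw [Finset.mem_Icc] at hm
      have h1 : ((d*m:ℕ):ℝ) ≤ ((d*M:ℕ):ℝ) := by
        exact_mod_cast Nat.mul_le_mul_left d hm.2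
      have h2 : (0:ℝ) ≤ ((d*m:ℕ):ℝ) := Nat.cast_nonneg _
      exact ⟨by linarith, by linarith⟩
    have hV0 : 0 ≤ ∑ m ∈ Finset.Icc 1 M, (E - ((d*m:ℕ):ℝ)) :=
      Finset.sum_nonneg (fun m hm => (hterm m hm).1)
    have hVle : ∑ m ∈ Finset.Icc 1 M, (E - ((d*m:ℕ):ℝ)) ≤ (M:ℝ) * E := by
      calc ∑ m ∈ Finset.Icc 1 M, (E - ((d*m:ℕ):ℝ))
          ≤ ∑ _m ∈ Finset.Icc 1 M, E := Finset.sum_le_sum (fun m hm => (hterm m hm).2)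
        _ = (M:ℝ) * E := by
            rw [Finset.sum_const, Nat.card_Icc]
            simp only [Nat.add_sub_cancel, nsmul_eq_mul]
    have hMd : (M:ℝ) * (d:ℝ) ≤ E := by
      have : ((d*M:ℕ):ℝ) = (d:ℝ)*(M:ℝ) := by push_cast; ring
      rw [this] at hdM
      linarith [hdM]
    have hgw := gw_nonneg H
    have hPhile : Phi E d ≤ Fw wH d := by
      rw [Phi, if_pos H, Fw_wH_eq H]
      have key : (∑ m ∈ Finset.Icc 1 M, (E - ((d*m:ℕ):ℝ))) / E^2 ≤ 1 / (d:ℝ) := by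
        rw [div_le_div_iff₀ (by positivity) hdr]
        have hM0 : (0:ℝ) ≤ (M:ℝ) := Nat.cast_nonneg _
        calc (∑ m ∈ Finset.Icc 1 M, (E - ((d*m:ℕ):ℝ))) * (d:ℝ)
            ≤ ((M:ℝ) * E) * (d:ℝ) := by
              exact mul_le_mul_of_nonneg_right hVle (le_of_lt hdr)
          _ = ((M:ℝ) * (d:ℝ)) * E := by ring
          _ ≤ E * E := mul_le_mul_of_nonneg_right hMd (le_of_lt hE0)
          _ = 1 * E^2 := by ring
      calc gw d * (∑ m ∈ Finset.Icc 1 M, (E - ((d*m:ℕ):ℝ))) / E ^ 2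
          = gw d * ((∑ m ∈ Finset.Icc 1 M, (E - ((d*m:ℕ):ℝ))) / E^2) := by ring
        _ ≤ gw d * (1/(d:ℝ)) := mul_le_mul_of_nonneg_left key hgw
        _ = gw d / d := by ring
    have hPhi0 : 0 ≤ Phi E d := by
      rw [Phi, if_pos H]
      exact div_nonneg (mul_nonneg hgw hV0) (by positivity)
    rw [Real.norm_eq_abs, abs_of_nonneg hPhi0]
    calc Phi E d ≤ Fw wH d := hPhile
      _ ≤ |Fw wH d| := le_abs_self _
      _ ≤ 2 * (d:ℝ)^(-(3/2):ℝ) := Fw_bound wH (fun p hp h2 => wH_bound hp h2) d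
  · rw [show Phi E d = 0 from if_neg H, norm_zero]
    exact mul_nonneg (by norm_num) (Real.rpow_nonneg (Nat.cast_nonneg d) _)

/-! ### Reduction of the weighted sum to `Phi` -/

lemma tsum_phi_eq (E : ℝ) :
    ∑' d, Phi E d = ∑ d ∈ (Finset.Icc 1 ⌊E⌋₊).filter Qd,
      gw d * (∑ m ∈ Finset.Icc 1 (⌊E⌋₊ / d), (E - ((d * m : ℕ) : ℝ))) / E ^ 2 := by
  rw [tsum_eq_sum (s := (Finset.Icc 1 ⌊E⌋₊).filter Qd) ?_]
  · exact Finset.sum_congr rfl (fun d hd => if_pos (Finset.mem_filter.mp hd).2)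
  · intro d hd
    rw [Phi]
    split_ifs with H
    · have hd1 : 1 ≤ d := Nat.pos_of_ne_zero H.1.ne_zero
      have hmem : ¬ d ∈ Finset.Icc 1 ⌊E⌋₊ := fun hmem => hd (Finset.mem_filter.mpr ⟨hmem, H⟩)
      rw [Finset.mem_Icc] at hmem
      have hgt : ⌊E⌋₊ < d := by omega
      rw [Nat.div_eq_of_lt hgt]
      simp
    · rfl

lemma sum_swap_eq {E : ℝ} (hE : 1 ≤ E) :
    ∑ k ∈ Finset.Icc 1 ⌊E⌋₊, ((E - (k:ℝ)) *
        ∏ p ∈ k.primeFactors.filter (fun p => 2 < p), (((p:ℝ) - 1)/((p:ℝ) - 2)))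
      = ∑ d ∈ (Finset.Icc 1 ⌊E⌋₊).filter Qd,
          gw d * (∑ m ∈ Finset.Icc 1 (⌊E⌋₊ / d), (E - ((d * m : ℕ) : ℝ))) := by
  have step1 : ∀ k ∈ Finset.Icc 1 ⌊E⌋₊, (E - (k:ℝ)) *
      ∏ p ∈ k.primeFactors.filter (fun p => 2 < p), (((p:ℝ) - 1)/((p:ℝ) - 2))
        = ∑ d ∈ k.divisors.filter Qd, (E - (k:ℝ)) * gw d := by
    intro k hk
    rw [Finset.mem_Icc] at hk
    rw [expand (show k ≠ 0 by omega), Finset.mul_sum]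
  rw [Finset.sum_congr rfl step1]
  rw [Finset.sum_comm' (t' := (Finset.Icc 1 ⌊E⌋₊).filter Qd)
    (s' := fun d => (Finset.Icc 1 ⌊E⌋₊).filter (fun k => d ∣ k)) ?_]
  · refine Finset.sum_congr rfl (fun d hd => ?_)
    rw [Finset.mem_filter, Finset.mem_Icc] at hd
    obtain ⟨⟨hd1, hdN⟩, hQ⟩ := hd
    have hd0 : 0 < d := hd1
    rw [Finset.mul_sum]
    refine Finset.sum_nbij' (fun k => k / d) (fun m => d * m) ?_ ?_ ?_ ?_ ?_
    · intro k hk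
      rw [Finset.mem_filter, Finset.mem_Icc] at hk
      obtain ⟨⟨hk1, hkN⟩, hdvd⟩ := hk
      rw [Finset.mem_Icc]
      exact ⟨(Nat.one_le_div_iff hd0).mpr (Nat.le_of_dvd (by omega) hdvd),
        Nat.div_le_div_right hkN⟩
    · intro m hm
      rw [Finset.mem_Icc] at hm
      rw [Finset.mem_filter, Finset.mem_Icc]
      refine ⟨⟨Nat.one_le_iff_ne_zero.mpr (Nat.mul_ne_zero (by omega) (by omega)), ?_⟩,
        dvd_mul_right d m⟩
      have h2 := (Nat.le_div_iff_mul_le hd0).mp hm.2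
      show d * m ≤ ⌊E⌋₊
      calc d * m = m * d := Nat.mul_comm d m
        _ ≤ ⌊E⌋₊ := h2
    · intro k hk
      rw [Finset.mem_filter] at hk
      exact Nat.mul_div_cancel' hk.2
    · intro m _
      exact Nat.mul_div_cancel_left m hd0
    · intro k hk
      rw [Finset.mem_filter] at hk
      rw [Nat.mul_div_cancel' hk.2]
      ring
  · intro k d
    constructor
    · rintro ⟨hk, hd⟩
      rw [Finset.mem_Icc] at hk
      rw [Finset.mem_filter, Nat.mem_divisors] at hd
      obtain ⟨⟨hdvd, -⟩, hQ⟩ := hd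
      have hd1 : 1 ≤ d := Nat.pos_of_ne_zero hQ.1.ne_zero
      have hdk : d ≤ k := Nat.le_of_dvd (by omega) hdvd
      exact ⟨Finset.mem_filter.mpr ⟨Finset.mem_Icc.mpr hk, hdvd⟩,
        Finset.mem_filter.mpr ⟨Finset.mem_Icc.mpr ⟨hd1, le_trans hdk hk.2⟩, hQ⟩⟩
    · rintro ⟨hk, hd⟩
      rw [Finset.mem_filter] at hk hd
      obtain ⟨hkI, hdvd⟩ := hk
      rw [Finset.mem_Icc] at hkI
      exact ⟨Finset.mem_Icc.mpr hkI,
        Finset.mem_filter.mpr ⟨Nat.mem_divisors.mpr ⟨hdvd, by omega⟩, hd.2⟩⟩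

end WSSA

open WSSA in
/-- `(1/E²) ∑_{1 ≤ k ≤ E} (E − k) C_{2k} → 1` as `E → ∞`. -/
theorem weighted_singular_series_average :
    Tendsto (fun E : ℝ =>
        (1 / E ^ 2) * ∑ k ∈ Finset.Icc 1 ⌊E⌋₊, (E - (k : ℝ)) * hlConst k)
      atTop (nhds 1) := by
  classical
  set c : ℝ := ∏' p : {p : ℕ // p.Prime ∧ 2 < p},
        ((p.1 : ℝ) * ((p.1 : ℝ) - 2)) / ((p.1 : ℝ) - 1) ^ 2 with hc
  have hcA : c = ∑' n, Fw wU n := hasProd_U.tprod_eq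
  have hsum : Summable (fun d : ℕ => 2 * (d:ℝ) ^ (-(3/2):ℝ)) :=
    ((Real.summable_nat_rpow (p := -(3/2))).mpr (by norm_num)).mul_left 2
  have hdom : Tendsto (fun E => ∑' d, Phi E d) atTop (𝓝 (∑' d, Fw wH d / 2)) :=
    tendsto_tsum_of_dominated_convergence hsum phi_tendsto phi_bound
  have htsum2 : ∑' d, Fw wH d / 2 = (∑' d, Fw wH d) / 2 := tsum_div_const
  have hfin : Tendsto (fun E => 2 * c * ∑' d, Phi E d) atTop
      (𝓝 (2 * c * ((∑' d, Fw wH d) / 2))) := by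
    rw [← htsum2]
    exact hdom.const_mul (2 * c)
  have hval : 2 * c * ((∑' d, Fw wH d) / 2) = 1 := by
    rw [hcA, ← AB_one]
    ring
  rw [show nhds (1:ℝ) = 𝓝 (2 * c * ((∑' d, Fw wH d) / 2)) by rw [hval]]
  refine Tendsto.congr' ?_ hfin
  filter_upwards [eventually_ge_atTop (1:ℝ)] with E hE
  have hE0 : (0:ℝ) < E := by linarith
  have hEne : E ≠ 0 := ne_of_gt hE0
  have hl : ∀ k : ℕ, hlConst k
      = 2 * c * ∏ p ∈ k.primeFactors.filter (fun p => 2 < p), (((p:ℝ)-1)/((p:ℝ)-2)) :=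
    fun k => rfl
  have h3 : ∑ k ∈ Finset.Icc 1 ⌊E⌋₊, (E - (k:ℝ)) * hlConst k
      = 2 * c * ∑ k ∈ Finset.Icc 1 ⌊E⌋₊, ((E - (k:ℝ)) *
          ∏ p ∈ k.primeFactors.filter (fun p => 2 < p), (((p:ℝ)-1)/((p:ℝ)-2))) := by
    rw [Finset.mul_sum]
    exact Finset.sum_congr rfl (fun k _ => by rw [hl k]; ring)
  rw [tsum_phi_eq, ← Finset.sum_div, ← sum_swap_eq hE, h3]
  ring
end

section
/- (Gallagher) With C_{2k} := 2 ∏_{p > 2} p(p−2)/(p−1)² · ∏_{2 < p | k} (p−1)/(p−2) (the first product over all odd primes, the second over odd primes dividing k), one has (2/y) · ∑_{2k ≤ y} C_{2k} → 2 as y → ∞, where the sum runs over even integers 2k with 2 ≤ 2k ≤ y. -/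
open Filter Finset

namespace GallagherAux

/-- A multiplicative-type function supported on squarefree numbers. -/
noncomputable def mf (F : ℕ → ℝ) (n : ℕ) : ℝ :=
  if Squarefree n then ∏ p ∈ n.primeFactors, F p else 0

noncomputable def Fg (p : ℕ) : ℝ := if 2 < p then 1 / ((p : ℝ) - 2) else 0
noncomputable def Fh (p : ℕ) : ℝ := if 2 < p then 1 / ((p : ℝ) * ((p : ℝ) - 2)) else 0
noncomputable def Fw (p : ℕ) : ℝ := if 2 < p then -(1 / ((p : ℝ) - 1) ^ 2) else 0

/-- multiplicative function supported on squarefree numbers, with value `F p` at primes. -/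
lemma mf_one (F : ℕ → ℝ) : mf F 1 = 1 := by simp [mf, squarefree_one]

lemma mf_zero (F : ℕ → ℝ) : mf F 0 = 0 := by simp [mf, not_squarefree_zero]

lemma mf_mul (F : ℕ → ℝ) {m n : ℕ} (h : Nat.Coprime m n) :
    mf F (m * n) = mf F m * mf F n := by
  rcases eq_or_ne m 0 with rfl | hm
  · simp [mf, not_squarefree_zero]
  rcases eq_or_ne n 0 with rfl | hn
  · simp [mf, not_squarefree_zero]
  unfold mf
  simp only [Nat.squarefree_mul h]
  by_cases h1 : Squarefree m
  · by_cases h2 : Squarefree n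
    · rw [if_pos ⟨h1, h2⟩, if_pos h1, if_pos h2, Nat.primeFactors_mul hm hn,
        Finset.prod_union h.disjoint_primeFactors]
    · simp [h1, h2]
  · simp [h1]

lemma mf_pp (F : ℕ → ℝ) {p : ℕ} (hp : p.Prime) (e : ℕ) :
    mf F (p ^ e) = if e = 0 then 1 else if e = 1 then F p else 0 := by
  match e with
  | 0 => simpa using mf_one F
  | 1 => simp [mf, hp.squarefree, hp.primeFactors]
  | (e + 2) =>
    have : ¬ Squarefree (p ^ (e + 2)) := by
      intro hs
      exact hp.not_isUnit (hs p (by rw [← pow_two]; exact pow_dvd_pow p (by omega)))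
    simp [mf, this]

lemma tsum_mf_pp (F : ℕ → ℝ) {p : ℕ} (hp : p.Prime) :
    ∑' e : ℕ, mf F (p ^ e) = 1 + F p := by
  rw [tsum_eq_sum (s := {0, 1}) (by intro e he; simp at he; rw [mf_pp F hp]; simp [he.1, he.2])]
  rw [Finset.sum_pair (by norm_num)]
  rw [mf_pp F hp, mf_pp F hp]; norm_num

/-- generic bound: if `|F p| * p^e ≤ 2` at `p = 3` and `≤ 1` at other primes, then
`|mf F n| * n^e ≤ 2`. -/
lemma mf_bound (F : ℕ → ℝ) (e : ℝ)
    (hF : ∀ p : ℕ, p.Prime → |F p| * (p : ℝ) ^ e ≤ if p = 3 then 2 else 1)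
    (n : ℕ) : |mf F n| * (n : ℝ) ^ e ≤ 2 := by
  by_cases hs : Squarefree n
  · have hn0 : n ≠ 0 := hs.ne_zero
    have hcast : (n : ℝ) = ∏ p ∈ n.primeFactors, (p : ℝ) := by
      rw [← Nat.cast_prod, Nat.prod_primeFactors_of_squarefree hs]
    rw [mf, if_pos hs, hcast, Finset.abs_prod,
      ← Real.finset_prod_rpow _ _ (fun p _ => by positivity) e, ← Finset.prod_mul_distrib]
    calc ∏ p ∈ n.primeFactors, |F p| * (p : ℝ) ^ e
        ≤ ∏ p ∈ n.primeFactors, (if p = 3 then (2:ℝ) else 1) := by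
          refine Finset.prod_le_prod (fun p _ => by positivity) (fun p hp => ?_)
          exact hF p (Nat.prime_of_mem_primeFactors hp)
      _ = if 3 ∈ n.primeFactors then 2 else 1 := by
          rw [Finset.prod_ite_eq' n.primeFactors 3 (fun _ => (2:ℝ))]
      _ ≤ 2 := by split <;> norm_num
  · rw [mf, if_neg hs, abs_zero, zero_mul]; norm_num

lemma squarefree_prod_primes {T : Finset ℕ} (hT : ∀ p ∈ T, p.Prime) :
    Squarefree (∏ p ∈ T, p) := by
  induction T using Finset.induction_on with
  | empty => simpa using squarefree_one
  | @insert a s ha ih =>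
    rw [Finset.prod_insert ha]
    have hap : a.Prime := hT a (Finset.mem_insert_self a s)
    have hcop : Nat.Coprime a (∏ p ∈ s, p) := by
      rw [Nat.Prime.coprime_iff_not_dvd hap]
      intro hdvd
      obtain ⟨q, hq, hdq⟩ := (Nat.Prime.prime hap).exists_mem_finset_dvd hdvd
      have : a = q := ((hT q (Finset.mem_insert_of_mem hq)).dvd_iff_eq hap.ne_one).mp hdq |>.symm
      exact ha (this ▸ hq)
    exact (Nat.squarefree_mul hcop).mpr
      ⟨hap.squarefree, ih (fun p hp => hT p (Finset.mem_insert_of_mem hp))⟩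

/-- divisor-sum identity -/
lemma sum_divisors_mf (F : ℕ → ℝ) {k : ℕ} (hk : k ≠ 0) :
    ∑ d ∈ k.divisors, mf F d = ∏ p ∈ k.primeFactors, (1 + F p) := by
  have h1 : ∑ d ∈ k.divisors, mf F d = ∑ d ∈ k.divisors.filter Squarefree, mf F d := by
    refine (Finset.sum_filter_of_ne (fun d _ hd => ?_)).symm
    by_contra hs; exact hd (by simp [mf, hs])
  rw [h1, Nat.sum_divisors_filter_squarefree hk]
  have h2 : (UniqueFactorizationMonoid.normalizedFactors k).toFinset = k.primeFactors := by
    rw [Nat.factors_eq]; simp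
  rw [h2]
  have h3 : ∀ T ∈ k.primeFactors.powerset, mf F T.val.prod = ∏ p ∈ T, F p := by
    intro T hT
    have hTp : ∀ p ∈ T, p.Prime :=
      fun p hp => Nat.prime_of_mem_primeFactors (Finset.mem_powerset.mp hT hp)
    have : T.val.prod = ∏ p ∈ T, p := by rw [Finset.prod_eq_multiset_prod, Multiset.map_id']
    rw [this, mf, if_pos (squarefree_prod_primes hTp), Nat.primeFactors_prod hTp]
  rw [Finset.sum_congr rfl h3]
  have := Finset.prod_add F (fun _ => (1:ℝ)) k.primeFactors
  simp only [Finset.prod_const_one, mul_one] at this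
  simp only [add_comm (1:ℝ)]
  rw [this]

lemma hasProd_primes (F : ℕ → ℝ) (hsum : Summable (fun n => ‖mf F n‖)) :
    HasProd (fun p : Nat.Primes => 1 + F (p : ℕ)) (∑' n, mf F n) := by
  have H := EulerProduct.eulerProduct_hasProd (f := mf F) (mf_one F)
    (fun {m n} hmn => mf_mul F hmn) hsum (mf_zero F)
  have heq : (fun p : Nat.Primes => ∑' e : ℕ, mf F ((p : ℕ) ^ e))
      = fun p : Nat.Primes => 1 + F (p : ℕ) := by
    funext p; exact tsum_mf_pp F p.2
  rwa [heq] at H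

/-- restrict to odd primes, assuming `F 2 = 0`. -/
lemma hasProd_oddPrimes (F : ℕ → ℝ) (h2 : F 2 = 0)
    (hsum : Summable (fun n => ‖mf F n‖)) :
    HasProd (fun q : {p : ℕ // p.Prime ∧ 2 < p} => 1 + F (q : ℕ)) (∑' n, mf F n) := by
  have H := hasProd_primes F hsum
  have hsupp : Function.mulSupport (fun p : Nat.Primes => 1 + F (p : ℕ))
      ⊆ {p : Nat.Primes | 2 < (p : ℕ)} := by
    intro p hp
    by_contra hle
    have hple : (p : ℕ) ≤ 2 := not_lt.mp hle
    have : (p : ℕ) = 2 := le_antisymm hple p.2.two_le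
    exact hp (by simp [this, h2])
  have H2 : HasProd ((fun p : Nat.Primes => 1 + F (p : ℕ)) ∘ (Subtype.val))
      (∑' n, mf F n) := (hasProd_subtype_iff_of_mulSupport_subset hsupp).mpr H
  let e : {p : ℕ // p.Prime ∧ 2 < p} ≃ {x : Nat.Primes // x ∈ {p : Nat.Primes | 2 < (p : ℕ)}} :=
    { toFun := fun q => ⟨⟨q.1, q.2.1⟩, q.2.2⟩
      invFun := fun x => ⟨x.1.1, x.1.2, x.2⟩
      left_inv := fun q => rfl
      right_inv := fun x => rfl }
  exact (Equiv.hasProd_iff e).mpr H2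

lemma prime_five_le {p : ℕ} (hp : p.Prime) (h2 : 2 < p) (h3 : p ≠ 3) : 5 ≤ p := by
  rcases Nat.lt_or_ge p 5 with h | h
  · interval_cases p
    · omega
    · exact absurd hp (by norm_num)
  · exact h

lemma sqrt_le_sub_two {p : ℕ} (hp : p.Prime) (h2 : 2 < p) (h3 : p ≠ 3) :
    Real.sqrt p ≤ (p : ℝ) - 2 := by
  have h5 : (5 : ℝ) ≤ p := by exact_mod_cast prime_five_le hp h2 h3
  have key : (p : ℝ) ≤ ((p : ℝ) - 2) ^ 2 := by nlinarith
  calc Real.sqrt p ≤ Real.sqrt (((p : ℝ) - 2) ^ 2) := Real.sqrt_le_sqrt key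
    _ = (p : ℝ) - 2 := by rw [Real.sqrt_sq (by linarith)]

lemma sqrt3_le_two : Real.sqrt 3 ≤ 2 := by
  nlinarith [Real.sq_sqrt (by norm_num : (3:ℝ) ≥ 0), Real.sqrt_nonneg (3:ℝ)]

lemma rpow_half (p : ℕ) : (p : ℝ) ^ (1/2 : ℝ) = Real.sqrt p := (Real.sqrt_eq_rpow _).symm

lemma rpow_threehalf {p : ℕ} (hp : 0 < p) :
    (p : ℝ) ^ (3/2 : ℝ) = (p : ℝ) * Real.sqrt p := by
  have hpos : (0 : ℝ) < p := by exact_mod_cast hp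
  rw [show (3/2 : ℝ) = 1 + 1/2 by norm_num, Real.rpow_add hpos, Real.rpow_one, rpow_half]

lemma bound_g (p : ℕ) (hp : p.Prime) :
    |Fg p| * (p : ℝ) ^ (1/2 : ℝ) ≤ if p = 3 then 2 else 1 := by
  rw [rpow_half]
  by_cases h2 : 2 < p
  · have hp3 : (3 : ℝ) ≤ p := by exact_mod_cast h2
    rw [Fg, if_pos h2, abs_of_nonneg (div_nonneg zero_le_one (by linarith))]
    by_cases h3 : p = 3
    · subst h3
      rw [if_pos rfl]
      push_cast
      nlinarith [sqrt3_le_two, Real.sqrt_nonneg (3:ℝ)]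
    · rw [if_neg h3]
      have hs := sqrt_le_sub_two hp h2 h3
      have h5 : (5 : ℝ) ≤ p := by exact_mod_cast prime_five_le hp h2 h3
      rw [div_mul_eq_mul_div, one_mul, div_le_one (by linarith)]
      exact hs
  · rw [Fg, if_neg h2, abs_zero, zero_mul]; split <;> norm_num

lemma bound_h (p : ℕ) (hp : p.Prime) :
    |Fh p| * (p : ℝ) ^ (3/2 : ℝ) ≤ if p = 3 then 2 else 1 := by
  rw [rpow_threehalf hp.pos]
  by_cases h2 : 2 < p
  · have hp3 : (3 : ℝ) ≤ p := by exact_mod_cast h2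
    rw [Fh, if_pos h2, abs_of_nonneg (div_nonneg zero_le_one (mul_nonneg (by linarith) (by linarith)))]
    have hsq : (0:ℝ) ≤ Real.sqrt p := Real.sqrt_nonneg _
    by_cases h3 : p = 3
    · subst h3
      rw [if_pos rfl]
      push_cast
      nlinarith [sqrt3_le_two, Real.sqrt_nonneg (3:ℝ)]
    · rw [if_neg h3]
      have hs := sqrt_le_sub_two hp h2 h3
      have h5 : (5 : ℝ) ≤ p := by exact_mod_cast prime_five_le hp h2 h3
      rw [div_mul_eq_mul_div, one_mul, div_le_one (by nlinarith)]
      nlinarith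
  · rw [Fh, if_neg h2, abs_zero, zero_mul]; split <;> norm_num

lemma bound_w (p : ℕ) (hp : p.Prime) :
    |Fw p| * (p : ℝ) ^ (3/2 : ℝ) ≤ if p = 3 then 2 else 1 := by
  rw [rpow_threehalf hp.pos]
  by_cases h2 : 2 < p
  · have hp3 : (3 : ℝ) ≤ p := by exact_mod_cast h2
    rw [Fw, if_pos h2, abs_neg, abs_of_nonneg (by positivity)]
    have hsq : (0:ℝ) ≤ Real.sqrt p := Real.sqrt_nonneg _
    by_cases h3 : p = 3
    · subst h3
      rw [if_pos rfl]
      push_cast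
      have h1 : (1 : ℝ) / ((3:ℝ) - 1) ^ 2 * (3 * Real.sqrt 3) = 3 * Real.sqrt 3 / 4 := by ring
      rw [h1]
      nlinarith [sqrt3_le_two, Real.sq_sqrt (by norm_num : (3:ℝ) ≥ 0), Real.sqrt_nonneg (3:ℝ)]
    · rw [if_neg h3]
      have hs := sqrt_le_sub_two hp h2 h3
      have h5 : (5 : ℝ) ≤ p := by exact_mod_cast prime_five_le hp h2 h3
      rw [div_mul_eq_mul_div, one_mul, div_le_one (by nlinarith)]
      nlinarith
  · rw [Fw, if_neg h2, abs_zero, zero_mul]; split <;> norm_num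

lemma mf_le (F : ℕ → ℝ) (e : ℝ) (he : 0 < e)
    (hF : ∀ p : ℕ, p.Prime → |F p| * (p : ℝ) ^ e ≤ if p = 3 then 2 else 1) (n : ℕ) :
    ‖mf F n‖ ≤ 2 * (((n : ℝ)) ^ e)⁻¹ := by
  rcases Nat.eq_zero_or_pos n with rfl | hn
  · simp [mf, not_squarefree_zero, Real.zero_rpow he.ne']
  · have hpos : (0 : ℝ) < (n : ℝ) ^ e := Real.rpow_pos_of_pos (by exact_mod_cast hn) e
    have := mf_bound F e hF n
    rw [Real.norm_eq_abs, ← div_eq_mul_inv, le_div_iff₀ hpos]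
    exact this

lemma summable_aux : Summable (fun n : ℕ => 2 * (((n : ℝ)) ^ (3/2 : ℝ))⁻¹) :=
  (Real.summable_nat_rpow_inv.mpr (by norm_num)).mul_left 2

lemma summable_mf_h : Summable (fun n => ‖mf Fh n‖) :=
  Summable.of_nonneg_of_le (fun _ => norm_nonneg _)
    (mf_le Fh (3/2) (by norm_num) bound_h) summable_aux

lemma summable_mf_w : Summable (fun n => ‖mf Fw n‖) :=
  Summable.of_nonneg_of_le (fun _ => norm_nonneg _)
    (mf_le Fw (3/2) (by norm_num) bound_w) summable_aux

lemma tendsto_mf_g_zero : Tendsto (mf Fg) atTop (nhds 0) := by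
  apply squeeze_zero_norm (mf_le Fg (1/2) (by norm_num) bound_g)
  have h1 : Tendsto (fun x : ℝ => (x ^ (1/2 : ℝ))⁻¹) atTop (nhds 0) :=
    (tendsto_rpow_atTop (by norm_num)).inv_tendsto_atTop
  have h2 : Tendsto (fun n : ℕ => ((n : ℝ) ^ (1/2 : ℝ))⁻¹) atTop (nhds 0) :=
    h1.comp tendsto_natCast_atTop_atTop
  simpa using h2.const_mul 2

lemma g_eq_d_mul_h (d : ℕ) : mf Fg d = (d : ℝ) * mf Fh d := by
  by_cases hs : Squarefree d
  · rw [mf, mf, if_pos hs, if_pos hs]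
    have hcast : (d : ℝ) = ∏ p ∈ d.primeFactors, (p : ℝ) := by
      rw [← Nat.cast_prod, Nat.prod_primeFactors_of_squarefree hs]
    rw [hcast, ← Finset.prod_mul_distrib]
    refine Finset.prod_congr rfl (fun p hp => ?_)
    have hp' := Nat.prime_of_mem_primeFactors hp
    by_cases h2 : 2 < p
    · have h3 : (3 : ℝ) ≤ (p : ℝ) := by exact_mod_cast h2
      rw [Fg, Fh, if_pos h2, if_pos h2]
      rw [mul_one_div, eq_div_iff (by nlinarith), one_div, inv_mul_eq_div,
        mul_div_assoc, div_self (by linarith : (p:ℝ) - 2 ≠ 0), mul_one]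
    · rw [Fg, Fh, if_neg h2, if_neg h2, mul_zero]
  · rw [mf, mf, if_neg hs, if_neg hs, mul_zero]

lemma prod_const_eq_one :
    (∑' n, mf Fw n) * (∑' n, mf Fh n) = 1 ∧
    HasProd (fun q : {p : ℕ // p.Prime ∧ 2 < p} =>
        ((q.1 : ℝ) * ((q.1 : ℝ) - 2)) / ((q.1 : ℝ) - 1) ^ 2) (∑' n, mf Fw n) := by
  have hw2 : Fw 2 = 0 := by simp [Fw]
  have hh2 : Fh 2 = 0 := by simp [Fh]
  have Hw0 := hasProd_oddPrimes Fw hw2 summable_mf_w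
  have Hh0 := hasProd_oddPrimes Fh hh2 summable_mf_h
  have hwfun : (fun q : {p : ℕ // p.Prime ∧ 2 < p} => 1 + Fw (q : ℕ))
      = fun q => ((q.1 : ℝ) * ((q.1 : ℝ) - 2)) / ((q.1 : ℝ) - 1) ^ 2 := by
    funext q
    have h3 : (3 : ℝ) ≤ (q.1 : ℝ) := by exact_mod_cast q.2.2
    rw [Fw, if_pos q.2.2]
    have hne : ((q.1 : ℝ) - 1) ^ 2 ≠ 0 := by nlinarith
    have hne1 : (q.1 : ℝ) - 1 ≠ 0 := by linarith
    field_simp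
    ring
  have hhfun : (fun q : {p : ℕ // p.Prime ∧ 2 < p} => 1 + Fh (q : ℕ))
      = fun q => (((q.1 : ℝ) - 1) ^ 2) / ((q.1 : ℝ) * ((q.1 : ℝ) - 2)) := by
    funext q
    have h3 : (3 : ℝ) ≤ (q.1 : ℝ) := by exact_mod_cast q.2.2
    rw [Fh, if_pos q.2.2]
    have hne : (q.1 : ℝ) * ((q.1 : ℝ) - 2) ≠ 0 := by nlinarith
    have hne1 : (q.1 : ℝ) - 2 ≠ 0 := by linarith
    have hne3 : (q.1 : ℝ) ≠ 0 := by linarith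
    field_simp
    ring
  rw [hwfun] at Hw0
  rw [hhfun] at Hh0
  refine ⟨?_, Hw0⟩
  have Hmul := Hw0.mul Hh0
  have hone : (fun q : {p : ℕ // p.Prime ∧ 2 < p} =>
      ((q.1 : ℝ) * ((q.1 : ℝ) - 2)) / ((q.1 : ℝ) - 1) ^ 2 *
        ((((q.1 : ℝ) - 1) ^ 2) / ((q.1 : ℝ) * ((q.1 : ℝ) - 2)))) = fun _ => (1 : ℝ) := by
    funext q
    have h3 : (3 : ℝ) ≤ (q.1 : ℝ) := by exact_mod_cast q.2.2
    have hne : (q.1 : ℝ) * ((q.1 : ℝ) - 2) ≠ 0 := by nlinarith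
    have hne2 : ((q.1 : ℝ) - 1) ^ 2 ≠ 0 := by nlinarith
    have hne4 : (q.1 : ℝ) - 2 ≠ 0 := by linarith
    have hne5 : (q.1 : ℝ) - 1 ≠ 0 := by linarith
    have hne6 : (q.1 : ℝ) ≠ 0 := by linarith
    field_simp
  rw [hone] at Hmul
  exact Hmul.unique hasProd_one

lemma mf_nonneg (F : ℕ → ℝ) (hF : ∀ p, p.Prime → 0 ≤ F p) (n : ℕ) : 0 ≤ mf F n := by
  rw [mf]
  split
  · exact Finset.prod_nonneg fun p hp => hF p (Nat.prime_of_mem_primeFactors hp)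
  · exact le_refl 0

lemma Fg_nonneg : ∀ p, p.Prime → 0 ≤ Fg p := by
  intro p hp; rw [Fg]; split
  · rename_i h; have : (3:ℝ) ≤ p := by exact_mod_cast h
    exact div_nonneg zero_le_one (by linarith)
  · exact le_refl 0

lemma Fh_nonneg : ∀ p, p.Prime → 0 ≤ Fh p := by
  intro p hp; rw [Fh]; split
  · rename_i h; have : (3:ℝ) ≤ p := by exact_mod_cast h
    have : (0:ℝ) < (p:ℝ) * ((p:ℝ) - 2) := by nlinarith
    positivity
  · exact le_refl 0

/-- the local factor identity -/
lemma prod_factor_eq (k : ℕ) (hk : k ≠ 0) :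
    ∏ p ∈ k.primeFactors.filter (fun p => 2 < p), ((p : ℝ) - 1) / ((p : ℝ) - 2)
      = ∑ d ∈ k.divisors, mf Fg d := by
  rw [sum_divisors_mf Fg hk, Finset.prod_filter]
  refine Finset.prod_congr rfl (fun p hp => ?_)
  by_cases h2 : 2 < p
  · have h3 : (3:ℝ) ≤ p := by exact_mod_cast h2
    rw [if_pos h2, Fg, if_pos h2]
    rw [eq_comm, add_comm, div_add' _ _ _ (by linarith : (p:ℝ) - 2 ≠ 0), one_mul]
    ring_nf
  · rw [if_neg h2, Fg, if_neg h2, add_zero]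

/-- summation swap -/
lemma swap_sum (N : ℕ) :
    ∑ k ∈ Finset.Icc 1 N, ∑ d ∈ k.divisors, mf Fg d
      = ∑ d ∈ Finset.Icc 1 N, mf Fg d * ((N / d : ℕ) : ℝ) := by
  have hIcc : Finset.Icc 1 N = Finset.Ioc 0 N := Finset.Icc_add_one_left_eq_Ioc 0 N
  rw [hIcc]
  have step1 : ∀ k ∈ Finset.Ioc 0 N,
      ∑ d ∈ k.divisors, mf Fg d = ∑ d ∈ Finset.Ioc 0 N, if d ∣ k then mf Fg d else 0 := by
    intro k hk
    obtain ⟨hk0, hkN⟩ := Finset.mem_Ioc.mp hk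
    have hdiv : (Finset.Ioc 0 N).filter (· ∣ k) = k.divisors := by
      ext d
      simp only [Finset.mem_filter, Finset.mem_Ioc, Nat.mem_divisors]
      constructor
      · rintro ⟨⟨_, _⟩, hd⟩; exact ⟨hd, by omega⟩
      · rintro ⟨hd, -⟩
        have h1 : 0 < d := Nat.pos_of_dvd_of_pos hd hk0
        have h2 : d ≤ k := Nat.le_of_dvd hk0 hd
        exact ⟨⟨h1, le_trans h2 hkN⟩, hd⟩
    rw [← hdiv, Finset.sum_filter]
  rw [Finset.sum_congr rfl step1, Finset.sum_comm]
  refine Finset.sum_congr rfl (fun d hd => ?_)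
  rw [← Finset.sum_filter, Finset.sum_const, ← Nat.Ioc_filter_dvd_card_eq_div N d,
    nsmul_eq_mul, mul_comm]

lemma sum_Icc_eq_range_succ (u : ℕ → ℝ) (hu : u 0 = 0) (N : ℕ) :
    ∑ d ∈ Finset.Icc 1 N, u d = ∑ d ∈ Finset.range (N + 1), u d := by
  refine Finset.sum_subset (fun x hx => ?_) (fun x hx hnx => ?_)
  · rw [Finset.mem_range]; exact Nat.lt_succ_of_le (Finset.mem_Icc.mp hx).2
  · have : x = 0 := by
      rcases Nat.eq_zero_or_pos x with h | h
      · exact h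
      · exact absurd (Finset.mem_Icc.mpr ⟨h, Nat.lt_succ_iff.mp (Finset.mem_range.mp hx)⟩) hnx
    rw [this, hu]

lemma tendsto_T : Tendsto (fun N => ∑ d ∈ Finset.Icc 1 N, mf Fh d) atTop
    (nhds (∑' n, mf Fh n)) := by
  have hs : Summable (mf Fh) := summable_mf_h.of_norm
  have h1 := hs.hasSum.tendsto_sum_nat
  have h2 := h1.comp (tendsto_add_atTop_nat 1)
  refine h2.congr (fun N => ?_)
  exact (sum_Icc_eq_range_succ (mf Fh) (mf_zero Fh) N).symm

lemma tendsto_avg_G :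
    Tendsto (fun N : ℕ => (N : ℝ)⁻¹ * ∑ d ∈ Finset.Icc 1 N, mf Fg d) atTop (nhds 0) := by
  have h1 := tendsto_mf_g_zero.cesaro
  have h2 := h1.comp (tendsto_add_atTop_nat 1)
  have h3 : Tendsto (fun N : ℕ => (1 + (N:ℝ)⁻¹)) atTop (nhds 1) := by
    simpa using (tendsto_inv_atTop_nhds_zero_nat (𝕜 := ℝ)).const_add 1
  have h4 := h3.mul h2
  rw [show (1:ℝ) * 0 = 0 by ring] at h4
  refine h4.congr' ?_
  filter_upwards [eventually_ge_atTop 1] with N hN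
  have hN0 : (0:ℝ) < N := by exact_mod_cast hN
  have : ((N + 1 : ℕ) : ℝ) = (N : ℝ) + 1 := by push_cast; ring
  simp only [Function.comp_apply, this]
  rw [← sum_Icc_eq_range_succ (mf Fg) (mf_zero Fg) N]
  field_simp

lemma main_avg : Tendsto (fun N : ℕ => (N : ℝ)⁻¹ *
      ∑ k ∈ Finset.Icc 1 N, ∏ p ∈ k.primeFactors.filter (fun p => 2 < p),
        ((p : ℝ) - 1) / ((p : ℝ) - 2)) atTop (nhds (∑' n, mf Fh n)) := by
  set S := ∑' n, mf Fh n
  set T : ℕ → ℝ := fun N => ∑ d ∈ Finset.Icc 1 N, mf Fh d with hT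
  set A : ℕ → ℝ := fun N => ∑ k ∈ Finset.Icc 1 N, ∏ p ∈ k.primeFactors.filter
    (fun p => 2 < p), ((p : ℝ) - 1) / ((p : ℝ) - 2) with hA
  have hAswap : ∀ N, A N = ∑ d ∈ Finset.Icc 1 N, mf Fg d * ((N / d : ℕ) : ℝ) := by
    intro N
    rw [hA, ← swap_sum N]
    refine Finset.sum_congr rfl (fun k hk => ?_)
    exact prod_factor_eq k (by have := (Finset.mem_Icc.mp hk).1; omega)
  -- termwise sandwich
  have sandwich : ∀ N : ℕ, |A N - (N : ℝ) * T N| ≤ ∑ d ∈ Finset.Icc 1 N, mf Fg d := by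
    intro N
    rw [hAswap N]
    have hTN : (N : ℝ) * T N = ∑ d ∈ Finset.Icc 1 N, (N : ℝ) * mf Fh d := by
      rw [hT]; exact Finset.mul_sum _ _ _
    rw [hTN, ← Finset.sum_sub_distrib]
    refine (Finset.abs_sum_le_sum_abs _ _).trans (Finset.sum_le_sum fun d hd => ?_)
    obtain ⟨hd1, hdN⟩ := Finset.mem_Icc.mp hd
    have hdpos : (0:ℝ) < (d:ℝ) := by exact_mod_cast hd1
    have hgd : 0 ≤ mf Fg d := mf_nonneg Fg Fg_nonneg d
    have hhd : 0 ≤ mf Fh d := mf_nonneg Fh Fh_nonneg d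
    have hgNh : mf Fg d * ((N:ℝ) / (d:ℝ)) = (N:ℝ) * mf Fh d := by
      rw [g_eq_d_mul_h d]; field_simp
    have hupper : mf Fg d * ((N / d : ℕ) : ℝ) ≤ (N:ℝ) * mf Fh d := by
      rw [← hgNh]
      exact mul_le_mul_of_nonneg_left Nat.cast_div_le hgd
    have hfloor : (N:ℝ) / (d:ℝ) - 1 ≤ ((N / d : ℕ) : ℝ) := by
      have h0 : (N / d : ℕ) = ⌊(N:ℝ) / (d:ℝ)⌋₊ := by
        rw [Nat.floor_div_natCast (N:ℝ) d, Nat.floor_natCast]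
      rw [h0]
      exact (Nat.sub_one_lt_floor _).le
    have hlower : (N:ℝ) * mf Fh d - mf Fg d ≤ mf Fg d * ((N / d : ℕ) : ℝ) := by
      have := mul_le_mul_of_nonneg_left hfloor hgd
      rw [mul_sub, mul_one, hgNh] at this
      linarith
    rw [abs_le]
    constructor <;> linarith
  -- divide by N
  have hdiff : Tendsto (fun N : ℕ => (N:ℝ)⁻¹ * A N - T N) atTop (nhds 0) := by
    apply squeeze_zero_norm _ tendsto_avg_G
    intro N
    rcases Nat.eq_zero_or_pos N with rfl | hN
    · simp [hA, hT]
    · have hN0 : (0:ℝ) < (N:ℝ) := by exact_mod_cast hN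
      have heq : (N:ℝ)⁻¹ * A N - T N = (N:ℝ)⁻¹ * (A N - (N:ℝ) * T N) := by
        field_simp
      rw [heq, norm_mul, norm_inv, Real.norm_natCast, Real.norm_eq_abs]
      exact mul_le_mul_of_nonneg_left (sandwich N) (by positivity)
  have := tendsto_T.add hdiff
  rw [add_zero] at this
  refine this.congr (fun N => ?_)
  rw [hT]
  ring

end GallagherAux

open GallagherAux in
/-- **Gallagher's Lemma.** `(2/y) ∑_{2k ≤ y} C_{2k} → 2` as `y → ∞`, where the sum runs
over even integers `2k` with `2 ≤ 2k ≤ y`. -/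
theorem gallagher_singular_series_average :
    Tendsto (fun y : ℝ => (2 / y) * ∑ k ∈ Finset.Icc 1 ⌊y / 2⌋₊, hlConst k)
      atTop (nhds 2) := by
  obtain ⟨hcS, Hw⟩ := prod_const_eq_one
  set c : ℝ := ∑' n, mf Fw n with hc
  set S : ℝ := ∑' n, mf Fh n with hS
  have htprod : (∏' p : {p : ℕ // p.Prime ∧ 2 < p},
      ((p.1 : ℝ) * ((p.1 : ℝ) - 2)) / ((p.1 : ℝ) - 1) ^ 2) = c := Hw.tprod_eq
  -- floor tends to infinity
  have hfloor : Tendsto (fun y : ℝ => ⌊y / 2⌋₊) atTop atTop :=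
    tendsto_nat_floor_atTop.comp (tendsto_id.atTop_div_const two_pos)
  have hψ : Tendsto (fun y : ℝ => ((⌊y / 2⌋₊ : ℝ))⁻¹ *
      ∑ k ∈ Finset.Icc 1 ⌊y / 2⌋₊, ∏ p ∈ k.primeFactors.filter (fun p => 2 < p),
        ((p : ℝ) - 1) / ((p : ℝ) - 2)) atTop (nhds S) := main_avg.comp hfloor
  -- ratio tends to 1
  have hφ : Tendsto (fun y : ℝ => 2 * (⌊y / 2⌋₊ : ℝ) / y) atTop (nhds 1) := by
    have hlow : Tendsto (fun y : ℝ => 1 - 2 / y) atTop (nhds 1) := by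
      have := (tendsto_inv_atTop_zero (𝕜 := ℝ)).const_mul 2
      rw [mul_zero] at this
      have h2 : Tendsto (fun y : ℝ => (1:ℝ) - 2 * y⁻¹) atTop (nhds (1 - 0)) :=
        tendsto_const_nhds.sub this
      rw [sub_zero] at h2
      refine h2.congr (fun y => ?_)
      rw [div_eq_mul_inv]
    refine tendsto_of_tendsto_of_tendsto_of_le_of_le' hlow tendsto_const_nhds ?_ ?_
    · filter_upwards [eventually_ge_atTop (2:ℝ)] with y hy
      have hy0 : (0:ℝ) < y := by linarith
      have h1 : y / 2 - 1 ≤ (⌊y / 2⌋₊ : ℝ) := (Nat.sub_one_lt_floor _).le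
      have key : (y - 2) / y ≤ 2 * (⌊y / 2⌋₊ : ℝ) / y := by
        apply div_le_div_of_nonneg_right ?_ hy0.le
        linarith
      calc 1 - 2 / y = (y - 2) / y := by field_simp
        _ ≤ 2 * (⌊y / 2⌋₊ : ℝ) / y := key
    · filter_upwards [eventually_ge_atTop (2:ℝ)] with y hy
      have hy0 : (0:ℝ) < y := by linarith
      have h2 : (⌊y / 2⌋₊ : ℝ) ≤ y / 2 := Nat.floor_le (by linarith)
      rw [div_le_one hy0]
      linarith
  -- combine
  have hmul : Tendsto (fun y : ℝ => (2 * c) * ((2 * (⌊y / 2⌋₊ : ℝ) / y) *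
      (((⌊y / 2⌋₊ : ℝ))⁻¹ * ∑ k ∈ Finset.Icc 1 ⌊y / 2⌋₊,
        ∏ p ∈ k.primeFactors.filter (fun p => 2 < p), ((p : ℝ) - 1) / ((p : ℝ) - 2))))
      atTop (nhds ((2 * c) * (1 * S))) := ((hφ.mul hψ).const_mul (2 * c))
  have hval : (2 * c) * (1 * S) = 2 := by
    rw [one_mul, mul_assoc, hcS, mul_one]
  rw [hval] at hmul
  refine hmul.congr' ?_
  have hN1 : ∀ᶠ y : ℝ in atTop, 1 ≤ ⌊y / 2⌋₊ := hfloor.eventually_ge_atTop 1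
  filter_upwards [hN1, eventually_ge_atTop (2:ℝ)] with y hNy hy2
  have hy0 : (0:ℝ) < y := by linarith
  have hN0 : (0:ℝ) < (⌊y / 2⌋₊ : ℝ) := by exact_mod_cast hNy
  have hlsum : ∑ k ∈ Finset.Icc 1 ⌊y / 2⌋₊, hlConst k
      = 2 * c * ∑ k ∈ Finset.Icc 1 ⌊y / 2⌋₊,
        ∏ p ∈ k.primeFactors.filter (fun p => 2 < p), ((p : ℝ) - 1) / ((p : ℝ) - 2) := by
    rw [Finset.mul_sum]
    refine Finset.sum_congr rfl (fun k hk => ?_)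
    rw [hlConst, htprod]
  rw [eq_comm, hlsum]
  field_simp
end
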